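/- arXiv:2202.00110 — 8 statements merged into one kernel-verified Lean document; each statement's English description precedes it below -/
import Mathlib

section
/- For every positive integer n and every nonnegative matrix A ∈ ℝ^{n×n} with spectrum Λ = (λ_1,…,λ_n), the power sums s_k(Λ) = Σ_i λ_i^k satisfy s_k(Λ)^m ≤ n^{m-1} · s_{km}(Λ) for all positive integers k, m. -/
/-!
The power sums of the spectrum are traces, `s_k(Λ) = trace (A ^ k)`: for a primitive `k`-th root
of unity `ζ`, evaluating `z ^ k - y ^ k = ∏ j, (z - ζ ^ j * y)` at `y = A` gives
`det (z ^ k - A ^ k) = ∏ j, det (z - ζ ^ j A) = ∏ i, (z ^ k - λ i ^ k)`, so `A ^ k` has spectrum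
`λ i ^ k`. For `B = A ^ k ≥ 0`, the power mean inequality on the diagonal gives
`(trace B) ^ m ≤ n ^ (m - 1) * ∑ i, B i i ^ m`, and `B i i ^ m ≤ (B ^ m) i i` since all the
terms in the expansion of `(B ^ m) i i` are nonnegative.
-/

open Matrix Polynomial Finset

namespace IsPrimitiveRoot

variable {K : Type*} [Field K] {ζ : K} {k : ℕ}

theorem pow_sub_pow_eq_prod (hζ : IsPrimitiveRoot ζ k) (hk : 0 < k) (z y : K) :
    z ^ k - y ^ k = ∏ j ∈ range k, (z - ζ ^ j * y) := by
  simpa [eval_prod] using congrArg (eval z) (X_pow_sub_C_eq_prod hζ hk (rfl : y ^ k = _))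

theorem C_pow_sub_X_pow_eq_prod [Infinite K] (hζ : IsPrimitiveRoot ζ k) (hk : 0 < k) (z : K) :
    C (z ^ k) - X ^ k = ∏ j ∈ range k, (C z - C (ζ ^ j) * X) :=
  Polynomial.funext fun y => by simpa [eval_prod] using hζ.pow_sub_pow_eq_prod hk z y

theorem det_scalar_pow_sub_pow_eq_prod [Infinite K] {n : Type*} [Fintype n] [DecidableEq n]
    (hζ : IsPrimitiveRoot ζ k) (hk : 0 < k) (z : K) (M : Matrix n n K) :
    det (scalar n (z ^ k) - M ^ k) = ∏ j ∈ range k, det (scalar n z - ζ ^ j • M) := by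
  let detAeval : K[X] →* K := detMonoidHom.comp (aeval M).toMonoidHom
  simpa [detAeval, map_prod, Algebra.smul_def, algebraMap_eq_diagonal, Pi.algebraMap_def,
    diagonal_pow, Pi.pow_def] using congrArg detAeval (hζ.C_pow_sub_X_pow_eq_prod hk z)

end IsPrimitiveRoot

namespace Matrix

variable {n : Type*} [Fintype n] [DecidableEq n]

theorem trace_eq_sum_of_charpoly_eq_prod {R ι : Type*} [CommRing R] [Fintype ι]
    {M : Matrix n n R} {lam : ι → R} (h : M.charpoly = ∏ i, (X - C (lam i))) :
    M.trace = ∑ i, lam i := by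
  rw [trace_eq_neg_charpoly_nextCoeff, h, prod_X_sub_C_nextCoeff, neg_neg]

variable {K : Type*} [Field K] {M : Matrix n n K} {lam : n → K}

theorem det_scalar_sub_smul_of_charpoly_eq_prod (h : M.charpoly = ∏ i, (X - C (lam i)))
    (z : K) {c : K} (hc : c ≠ 0) :
    det (scalar n z - c • M) = ∏ i, (z - c * lam i) := by
  have hscal : scalar n z - c • M = c • (scalar n (z / c) - M) := by
    simp [smul_sub, ← diagonal_smul, mul_div_cancel₀ _ hc]
  rw [hscal, det_smul, ← eval_charpoly, h, eval_prod, ← card_univ, ← prod_const,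
    ← prod_mul_distrib]
  simp [mul_sub, mul_div_cancel₀ _ hc]

theorem charpoly_pow_eq_prod_of_charpoly_eq_prod [Infinite K]
    (h : M.charpoly = ∏ i, (X - C (lam i))) {ζ : K} {k : ℕ} (hζ : IsPrimitiveRoot ζ k)
    (hk : 0 < k) : (M ^ k).charpoly = ∏ i, (X - C (lam i ^ k)) := by
  refine expand_injective hk (Polynomial.funext fun z => ?_)
  have hζj : ∀ j, ζ ^ j ≠ 0 := fun j => pow_ne_zero _ (hζ.ne_zero hk.ne')
  calc eval z (expand K k (M ^ k).charpoly) = det (scalar n (z ^ k) - M ^ k) := by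
        rw [expand_eval, eval_charpoly]
    _ = ∏ j ∈ range k, ∏ i, (z - ζ ^ j * lam i) := by
        rw [hζ.det_scalar_pow_sub_pow_eq_prod hk]
        exact prod_congr rfl fun j _ => det_scalar_sub_smul_of_charpoly_eq_prod h z (hζj j)
    _ = ∏ i, (z ^ k - lam i ^ k) := by
        rw [prod_comm]
        exact prod_congr rfl fun i _ => (hζ.pow_sub_pow_eq_prod hk z (lam i)).symm
    _ = eval z (expand K k (∏ i, (X - C (lam i ^ k)))) := by
        simp [eval_prod]

theorem trace_pow_eq_sum_pow_of_charpoly_eq_prod {M : Matrix n n ℂ} {lam : n → ℂ}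
    (h : M.charpoly = ∏ i, (X - C (lam i))) (k : ℕ) : (M ^ k).trace = ∑ i, lam i ^ k := by
  rcases k.eq_zero_or_pos with rfl | hk
  · simp
  · exact trace_eq_sum_of_charpoly_eq_prod <|
      charpoly_pow_eq_prod_of_charpoly_eq_prod h (Complex.isPrimitiveRoot_exp k hk.ne') hk

theorem apply_self_pow_le_pow_apply_self {R : Type*} [Semiring R] [PartialOrder R]
    [IsOrderedRing R] {B : Matrix n n R} (hB : ∀ i j, 0 ≤ B i j) (m : ℕ) (i : n) :
    B i i ^ m ≤ (B ^ m) i i := by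
  induction m with
  | zero => simp
  | succ m ih =>
    rw [pow_succ, pow_succ, mul_apply]
    calc B i i ^ m * B i i ≤ (B ^ m) i i * B i i := mul_le_mul_of_nonneg_right ih (hB i i)
      _ ≤ ∑ l, (B ^ m) i l * B l i :=
        single_le_sum (f := fun l => (B ^ m) i l * B l i)
          (fun l _ => mul_nonneg (pow_apply_nonneg hB m i l) (hB l i)) (mem_univ i)

theorem trace_pow_le_card_pow_mul_trace_pow {R : Type*} [Semiring R] [LinearOrder R]
    [IsStrictOrderedRing R] [ExistsAddOfLE R] {B : Matrix n n R} (hB : ∀ i j, 0 ≤ B i j)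
    (m : ℕ) : B.trace ^ (m + 1) ≤ (Fintype.card n : R) ^ m * (B ^ (m + 1)).trace :=
  calc B.trace ^ (m + 1) ≤ (Fintype.card n : R) ^ m * ∑ i, B i i ^ (m + 1) :=
        pow_sum_le_card_mul_sum_pow (fun i _ => hB i i) m
    _ ≤ (Fintype.card n : R) ^ m * (B ^ (m + 1)).trace := by
        gcongr
        exact sum_le_sum fun i _ => apply_self_pow_le_pow_apply_self hB _ i

end Matrix

theorem jll_inequality_general (n : ℕ) (A : Matrix (Fin n) (Fin n) ℝ)
    (hA : ∀ i j, 0 ≤ A i j) (lam : Fin n → ℂ)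
    (hspec : (A.map (fun x => (x : ℂ))).charpoly =
      ∏ i, (Polynomial.X - Polynomial.C (lam i)))
    (k m : ℕ) (hm : 0 < m) :
    ((∑ i, lam i ^ k) ^ m).re ≤ (n : ℝ) ^ (m - 1) * (∑ i, lam i ^ (k * m)).re := by
  have hpow (j : ℕ) : ∑ i, lam i ^ j = ((A ^ j).trace : ℂ) := by
    have hmap : (A.map fun x => (x : ℂ)) ^ j = (A ^ j).map Complex.ofRealHom :=
      (Matrix.map_pow A Complex.ofRealHom j).symm
    simp [← trace_pow_eq_sum_pow_of_charpoly_eq_prod hspec j, hmap, trace]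
  obtain ⟨m, rfl⟩ : ∃ m', m = m' + 1 := ⟨m - 1, by omega⟩
  rw [hpow, hpow, pow_mul, ← Complex.ofReal_pow, Complex.ofReal_re, Complex.ofReal_re,
    Nat.add_sub_cancel]
  simpa using trace_pow_le_card_pow_mul_trace_pow (pow_apply_nonneg hA k) m

/-- JLL inequality: for an entrywise nonnegative `n × n` real matrix `A` with
spectrum `λ₁, …, λₙ`, the power sums satisfy `s_k(Λ)^m ≤ n^(m-1) s_{km}(Λ)`. -/
theorem jll_inequality (n : ℕ) (hn : 0 < n) (A : Matrix (Fin n) (Fin n) ℝ)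
    (hA : ∀ i j, 0 ≤ A i j) (lam : Fin n → ℂ)
    (hspec : (A.map (fun x => (x : ℂ))).charpoly =
      ∏ i, (Polynomial.X - Polynomial.C (lam i)))
    (k m : ℕ) (hk : 0 < k) (hm : 0 < m) :
    ((∑ i, lam i ^ k) ^ m).re ≤ (n : ℝ) ^ (m - 1) * (∑ i, lam i ^ (k * m)).re :=
  jll_inequality_general n A hA lam hspec k m hm
end

section
/- Let n ≥ 1 and let A be an n×n entrywise nonnegative real matrix, B = A^n. Then for every real a with 0 < a ≤ 2, the (i,i) diagonal entry of I - aB + B² is nonnegative for each i, and more generally each diagonal entry of p_a(A) is nonnegative, where p_a(x) = 1 + x + ⋯ + x^{n-1} - a x^n + x^{n+1} + ⋯ + x^{2n}. -/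
/-- The polynomial `p_a(x) = 1 + x + ⋯ + x^{n-1} - a xⁿ + x^{n+1} + ⋯ + x^{2n}`. -/
noncomputable def pPoly (n : ℕ) (a : ℝ) : Polynomial ℝ :=
  ∑ j ∈ Finset.range (2 * n + 1),
    Polynomial.C (if j = n then -a else 1) * Polynomial.X ^ j

lemma pow_entry_nonneg {n : ℕ} (A : Matrix (Fin n) (Fin n) ℝ)
    (hA : ∀ i j, 0 ≤ A i j) (k : ℕ) : ∀ i j, 0 ≤ (A ^ k) i j := by
  induction k with
  | zero =>
      intro i j
      simp only [pow_zero, Matrix.one_apply]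
      split <;> norm_num
  | succ m ih =>
      intro i j
      rw [pow_succ, Matrix.mul_apply]
      exact Finset.sum_nonneg fun k _ => mul_nonneg (ih i k) (hA k j)

lemma key_ineq {n : ℕ} (B : Matrix (Fin n) (Fin n) ℝ)
    (hB : ∀ i j, 0 ≤ B i j) (a : ℝ) (ha2 : a ≤ 2) (i : Fin n) :
    0 ≤ 1 - a * B i i + (B * B) i i := by
  have h1 : B i i * B i i ≤ (B * B) i i := by
    rw [Matrix.mul_apply]
    exact Finset.single_le_sum (fun k _ => mul_nonneg (hB i k) (hB k i))
      (Finset.mem_univ i)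
  nlinarith [sq_nonneg (1 - B i i), hB i i]

/-- Diagonal entries of `I - aB + B²` (with `B = Aⁿ`) and of `p_a(A)` are
nonnegative for `0 < a ≤ 2`. -/
theorem diagonal_entries_nonneg (n : ℕ) (hn : 1 ≤ n)
    (A : Matrix (Fin n) (Fin n) ℝ) (hA : ∀ i j, 0 ≤ A i j)
    (a : ℝ) (ha0 : 0 < a) (ha2 : a ≤ 2) :
    (∀ i, 0 ≤ ((1 : Matrix (Fin n) (Fin n) ℝ) - a • A ^ n + (A ^ n) ^ 2) i i) ∧
      (∀ i, 0 ≤ (Polynomial.aeval A) (pPoly n a) i i) := by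
  have hB : ∀ i j, 0 ≤ (A ^ n) i j := pow_entry_nonneg A hA n
  constructor
  · intro i
    have := key_ineq (A ^ n) hB a ha2 i
    simpa [Matrix.add_apply, Matrix.sub_apply, Matrix.smul_apply, Matrix.one_apply_eq,
      sq, sub_eq_add_neg, add_assoc, add_comm] using this
  · intro i
    have heval : (Polynomial.aeval A) (pPoly n a) =
        ∑ j ∈ Finset.range (2 * n + 1), (if j = n then -a else 1) • A ^ j := by
      unfold pPoly
      rw [map_sum]
      refine Finset.sum_congr rfl fun j _ => ?_
      rw [map_mul, Polynomial.aeval_C, map_pow, Polynomial.aeval_X,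
        Algebra.algebraMap_eq_smul_one, smul_one_mul]
    rw [heval]
    have hsum : (∑ j ∈ Finset.range (2 * n + 1), (if j = n then -a else 1) • A ^ j) i i
        = ∑ j ∈ Finset.range (2 * n + 1), (if j = n then -a else 1) * (A ^ j) i i := by
      rw [Matrix.sum_apply]
      rfl
    rw [hsum]
    have hsub : ({0, n, 2 * n} : Finset ℕ) ⊆ Finset.range (2 * n + 1) := by
      intro x hx
      simp only [Finset.mem_insert, Finset.mem_singleton] at hx
      rcases hx with rfl | rfl | rfl <;> simp [Finset.mem_range] <;> omega
    have hmain : 0 ≤ ∑ j ∈ ({0, n, 2 * n} : Finset ℕ),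
        (if j = n then -a else 1) * (A ^ j) i i := by
      have h0n : (0 : ℕ) ≠ n := by omega
      have h02n : (0 : ℕ) ≠ 2 * n := by omega
      have hn2n : n ≠ 2 * n := by omega
      rw [Finset.sum_insert (by simp [h0n, h02n]), Finset.sum_insert (by simp [hn2n]),
        Finset.sum_singleton]
      have hn2n' : 2 * n ≠ n := by omega
      simp only [if_neg h0n, if_pos rfl, if_neg hn2n', pow_zero, Matrix.one_apply_eq, if_true, eq_self_iff_true]
      have h2 : A ^ (2 * n) = (A ^ n) * (A ^ n) := by
        rw [two_mul, pow_add]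
      rw [h2]
      have := key_ineq (A ^ n) hB a ha2 i
      linarith
    refine le_trans hmain (Finset.sum_le_sum_of_subset_of_nonneg hsub ?_)
    intro j hj hjn
    have : j ≠ n := by
      intro h; subst h
      exact hjn (by simp)
    rw [if_neg this, one_mul]
    exact pow_entry_nonneg A hA j i i
end

section
/- Let n ≥ 2 and define μ(n,k) = (n-k+1)∏_{j=1}^{k-1}(n-j) for 1 ≤ k ≤ n-1. Then for every real a with 0 < a ≤ min_{1 ≤ k ≤ n-1} 2/√(μ(n,k)), the polynomial p_a(x) = 1 + x + ⋯ + x^{n-1} - a x^n + x^{n+1} + ⋯ + x^{2n} belongs to 𝒫_n, i.e., p_a(A) is entrywise nonnegative for every entrywise nonnegative n×n real matrix A. -/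
/-- `𝒫 n`: real polynomials mapping entrywise nonnegative `n × n` matrices to
entrywise nonnegative matrices. -/
def polyPreservesNonneg (n : ℕ) : Set (Polynomial ℝ) :=
  {p | ∀ A : Matrix (Fin n) (Fin n) ℝ, (∀ i j, 0 ≤ A i j) →
    ∀ i j, 0 ≤ (Polynomial.aeval A) p i j}

/-- `μ(n,k) = (n-k+1)·∏_{j=1}^{k-1}(n-j)`. -/
def muBound (n k : ℕ) : ℕ := (n - k + 1) * ∏ j ∈ Finset.Icc 1 (k - 1), (n - j)

/-!
Expand `(Aⁿ)ᵢⱼ` as a sum of weights `w` of walks of length `n` on `n` vertices. Such a walk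
revisits a vertex; let `ℓ ∈ [1, n]` be the length of the loop closed at the first repetition.
Erasing that loop gives a walk of length `n - ℓ` of weight `p`, traversing it twice gives one of
length `n + ℓ` of weight `q`, and `w² = p q`. The doubled walk determines the original one, and a
walk of length `n - ℓ` arises from at most `μ(n, ℓ)` walks (choose where the loop starts and its
`ℓ - 1` inner vertices, all distinct). By AM-GM, `a w ≤ p / μ + (a² μ / 4) q`, and summing over
the walks with loop length `ℓ` gives at most `(A^{n-ℓ})ᵢⱼ + (A^{n+ℓ})ᵢⱼ` once `a² μ ≤ 4` (for
`ℓ = n` this follows from `μ(n, n) ≤ μ(n, n - 1)`).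
Summing over `ℓ` yields `a (Aⁿ)ᵢⱼ ≤ ∑_{m ≠ n} (Aᵐ)ᵢⱼ`, which is `p_a(A)ᵢⱼ ≥ 0`.
-/

open Finset

variable {ι : Type*}

lemma sum_comp_le_mul_sum_of_card_fiber_le {α β R : Type*} [DecidableEq β] [CommSemiring R]
    [PartialOrder R] [IsOrderedRing R] {s : Finset α} {t : Finset β} {φ : α → β} {g : β → R}
    (hφ : ∀ a ∈ s, φ a ∈ t) {M : ℕ} (hM : ∀ b ∈ t, #{a ∈ s | φ a = b} ≤ M)
    (hg : ∀ b ∈ t, 0 ≤ g b) :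
    ∑ a ∈ s, g (φ a) ≤ M * ∑ b ∈ t, g b := by
  rw [← sum_fiberwise_of_maps_to hφ, mul_sum]
  refine sum_le_sum fun b hb => ?_
  rw [sum_congr rfl fun a ha => by rw [(mem_filter.1 ha).2], sum_const, nsmul_eq_mul]
  exact mul_le_mul_of_nonneg_right (Nat.mono_cast (hM b hb)) (hg b hb)

lemma card_injective_forall_ne [Fintype ι] [DecidableEq ι] (c : ι) (k : ℕ) :
    #{g : Fin k → ι | Function.Injective g ∧ ∀ d, g d ≠ c} =
      (Fintype.card ι - 1).descFactorial k := by
  let e : {g : Fin k → ι // Function.Injective g ∧ ∀ d, g d ≠ c} ≃ (Fin k ↪ {x // x ≠ c}) :=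
    { toFun g := ⟨fun d => ⟨g.1 d, g.2.2 d⟩, fun _ _ h => g.2.1 (congrArg Subtype.val h)⟩
      invFun e := ⟨fun d => e d, Subtype.val_injective.comp e.injective, fun d => (e d).2⟩
      left_inv _ := rfl
      right_inv _ := rfl }
  rw [← Fintype.card_subtype, Fintype.card_congr e, Fintype.card_embedding_eq,
    Fintype.card_fin, Fintype.card_subtype_compl, Fintype.card_subtype_eq]

lemma two_mul_mul_le_add_of_sq_eq {p q w : ℝ} (x : ℝ) (hp : 0 ≤ p) (hq : 0 ≤ q)
    (h : w ^ 2 = p * q) : 2 * x * w ≤ p + x ^ 2 * q := by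
  rcases hp.eq_or_lt with rfl | hp
  · rw [zero_mul, sq_eq_zero_iff] at h
    rw [h, mul_zero, zero_add]
    positivity
  · have key : p * (p + x ^ 2 * q) - p * (2 * x * w) = (p - x * w) ^ 2 := by
      linear_combination (-x ^ 2) * h
    exact le_of_mul_le_mul_left (by linarith [sq_nonneg (p - x * w)]) hp

lemma sq_mul_le_four_of_le_two_div_sqrt {a x : ℝ} (ha : 0 ≤ a) (h : a ≤ 2 / √x) :
    a ^ 2 * x ≤ 4 := by
  rcases (Real.sqrt_nonneg x).eq_or_lt with h0 | hpos
  · nlinarith [Real.sqrt_eq_zero'.1 h0.symm, sq_nonneg a]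
  · have hx := Real.sq_sqrt (Real.sqrt_pos.1 hpos).le
    have := (le_div_iff₀ hpos).1 h
    nlinarith [mul_nonneg ha hpos.le]

lemma muBound_eq {n ℓ : ℕ} (hℓ : 1 ≤ ℓ) :
    muBound n ℓ = (n - ℓ + 1) * (n - 1).descFactorial (ℓ - 1) := by
  rw [muBound, Nat.descFactorial_eq_prod_range, ← Finset.Ico_add_one_right_eq_Icc,
    Finset.prod_Ico_eq_prod_range, Nat.sub_add_cancel hℓ]
  congr 1
  exact prod_congr rfl fun k _ => by omega

lemma muBound_pos {n ℓ : ℕ} (h : ℓ ≤ n) : 0 < muBound n ℓ :=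
  Nat.mul_pos (Nat.succ_pos _) (prod_pos fun k hk => by rw [mem_Icc] at hk; omega)

lemma muBound_self_le_pred (n : ℕ) : muBound n n ≤ muBound n (n - 1) := by
  rcases Nat.lt_or_ge n 2 with hn | hn
  · interval_cases n <;> decide
  · obtain ⟨k, rfl⟩ := Nat.exists_eq_add_of_le' hn
    rw [muBound_eq (by omega), muBound_eq (by omega), show k + 2 - 1 - 1 = k by omega,
      show k + 2 - 1 = k + 1 by omega, Nat.descFactorial_succ, show k + 1 - k = 1 by omega,
      show k + 2 - (k + 2) + 1 = 1 by omega, show k + 2 - (k + 1) + 1 = 2 by omega]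
    omega

lemma sq_mul_muBound_le_four {n : ℕ} (hn : 2 ≤ n) {a : ℝ} (ha0 : 0 ≤ a)
    (ha : ∀ k, 1 ≤ k → k ≤ n - 1 → a ≤ 2 / √(muBound n k)) :
    ∀ ℓ ∈ Icc 1 n, a ^ 2 * muBound n ℓ ≤ 4 := by
  intro ℓ hℓ
  obtain ⟨h1, h2⟩ := mem_Icc.1 hℓ
  rcases h2.lt_or_eq with h2 | rfl
  · exact sq_mul_le_four_of_le_two_div_sqrt ha0 (ha ℓ h1 (by omega))
  · calc a ^ 2 * muBound ℓ ℓ ≤ a ^ 2 * muBound ℓ (ℓ - 1) := by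
          gcongr
          exact muBound_self_le_pred ℓ
      _ ≤ 4 := sq_mul_le_four_of_le_two_div_sqrt ha0 (ha (ℓ - 1) (by omega) le_rfl)

section Walks

variable {R : Type*} [CommSemiring R] (A : Matrix ι ι R)

def walkWeight (m : ℕ) (v : ℕ → ι) : R := ∏ r ∈ range m, A (v r) (v (r + 1))

variable {A} in
lemma walkWeight_congr {m : ℕ} {v w : ℕ → ι} (h : ∀ r ≤ m, v r = w r) :
    walkWeight A m v = walkWeight A m w :=
  prod_congr rfl fun r hr => by
    rw [mem_range] at hr
    rw [h r hr.le, h (r + 1) hr]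

lemma walkWeight_add (a b : ℕ) (v : ℕ → ι) :
    walkWeight A (a + b) v = walkWeight A a v * walkWeight A b (fun r => v (a + r)) :=
  prod_range_add _ _ _

lemma walkWeight_succ (m : ℕ) (v : ℕ → ι) :
    walkWeight A (m + 1) v = A (v 0) (v 1) * walkWeight A m (fun r => v (r + 1)) := by
  rw [walkWeight, prod_range_succ', mul_comm]
  rfl

lemma walkWeight_nonneg [PartialOrder R] [IsOrderedRing R] {A : Matrix ι ι R}
    (hA : ∀ i j, 0 ≤ A i j) (m : ℕ) (v : ℕ → ι) : 0 ≤ walkWeight A m v :=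
  prod_nonneg fun _ _ => hA _ _

def stopAt (m : ℕ) (v : ℕ → ι) : ℕ → ι := fun r => v (min r m)

lemma stopAt_of_le {m r : ℕ} (v : ℕ → ι) (h : r ≤ m) : stopAt m v r = v r := by
  rw [stopAt, min_eq_left h]

lemma stopAt_stopAt (m : ℕ) (v : ℕ → ι) : stopAt m (stopAt m v) = stopAt m v :=
  funext fun r => by simp [stopAt]

lemma walkWeight_stopAt (m : ℕ) (v : ℕ → ι) : walkWeight A m (stopAt m v) = walkWeight A m v :=
  walkWeight_congr fun _ => stopAt_of_le v

variable [Fintype ι] [DecidableEq ι]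

/-- A walk of length `m` is encoded as a sequence that stays put from time `m` on. -/
def walks (m : ℕ) (i j : ι) : Finset (ℕ → ι) :=
  ({f : Fin (m + 1) → ι | f 0 = i ∧ f (Fin.last m) = j} : Finset _).map
    ⟨fun f r => f (Fin.clamp r m), fun f g h => funext fun k => by
      simpa [Fin.clamp, Fin.ext_iff, min_eq_left k.is_le] using congrFun h k⟩

lemma mem_walks {m : ℕ} {i j : ι} {v : ℕ → ι} :
    v ∈ walks m i j ↔ stopAt m v = v ∧ v 0 = i ∧ v m = j := by
  simp only [walks, mem_map, mem_filter, mem_univ, true_and]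
  constructor
  · rintro ⟨f, ⟨hi, hj⟩, rfl⟩
    refine ⟨funext fun r => ?_, hi, by simpa [Fin.clamp, Fin.last] using hj⟩
    simp [stopAt, Fin.clamp]
  · rintro ⟨hv, hi, hj⟩
    exact ⟨fun k => v k, ⟨hi, hj⟩, funext fun r => congrFun hv r⟩

lemma stopAt_mem_walks {m : ℕ} {i j : ι} {v : ℕ → ι} (hi : v 0 = i) (hj : v m = j) :
    stopAt m v ∈ walks m i j :=
  mem_walks.2 ⟨stopAt_stopAt m v, by rwa [stopAt_of_le v (Nat.zero_le m)],
    by rwa [stopAt_of_le v le_rfl]⟩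

lemma eq_of_mem_walks_of_eqOn {m : ℕ} {i j i' j' : ι} {v w : ℕ → ι} (hv : v ∈ walks m i j)
    (hw : w ∈ walks m i' j') (h : ∀ r ≤ m, v r = w r) : v = w := by
  rw [← (mem_walks.1 hv).1, ← (mem_walks.1 hw).1]
  exact funext fun r => h _ (min_le_right r m)

lemma walks_zero_self (i : ι) : walks 0 i i = {fun _ => i} := by
  ext v
  simp only [mem_walks, mem_singleton, and_self]
  constructor
  · rintro ⟨hv, rfl⟩
    exact funext fun r => by simpa [stopAt] using (congrFun hv r).symm
  · rintro rfl
    exact ⟨rfl, rfl⟩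

theorem Matrix.pow_apply_eq_sum_walkWeight (m : ℕ) (i j : ι) :
    (A ^ m) i j = ∑ v ∈ walks m i j, walkWeight A m v := by
  induction m generalizing i with
  | zero =>
    by_cases hij : i = j
    · subst hij
      simp [walks_zero_self, walkWeight]
    · rw [pow_zero, Matrix.one_apply_ne hij, eq_comm]
      refine sum_eq_zero fun v hv => absurd ?_ hij
      obtain ⟨-, hi, hj⟩ := mem_walks.1 hv
      exact hi.symm.trans hj
  | succ m ih =>
    rw [pow_succ', Matrix.mul_apply, ← sum_fiberwise (walks (m + 1) i j) (fun v => v 1)]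
    refine sum_congr rfl fun k _ => ?_
    rw [ih, mul_sum]
    refine sum_nbij' (fun w r => if r = 0 then i else w (r - 1)) (fun v r => v (r + 1))
      ?_ ?_ ?_ ?_ ?_
    · intro w hw
      obtain ⟨hw, hk, hj⟩ := mem_walks.1 hw
      simp only [mem_filter, mem_walks]
      refine ⟨⟨funext fun r => ?_, rfl, by simpa using hj⟩, by simpa using hk⟩
      rcases r with _ | r
      · rfl
      · simpa [stopAt] using congrFun hw r
    · intro v hv
      obtain ⟨hv, hk⟩ := mem_filter.1 hv
      obtain ⟨hv, -, hj⟩ := mem_walks.1 hv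
      refine mem_walks.2 ⟨funext fun r => ?_, hk, hj⟩
      simpa [stopAt] using congrFun hv (r + 1)
    · intro w _
      funext r
      simp
    · intro v hv
      funext r
      rcases r with _ | r
      · exact (mem_walks.1 (mem_filter.1 hv).1).2.1.symm
      · simp
    · intro w hw
      rw [walkWeight_succ, (mem_walks.1 hw).2.1]
      simp

end Walks

section FirstLoop

noncomputable def loopEnd (v : ℕ → ι) : ℕ := sInf {t | ∃ s < t, v s = v t}

noncomputable def loopStart (v : ℕ → ι) : ℕ := sInf {s | s < loopEnd v ∧ v s = v (loopEnd v)}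

noncomputable def loopLength (v : ℕ → ι) : ℕ := loopEnd v - loopStart v

lemma eq_of_apply_eq_of_lt_loopEnd {v : ℕ → ι} {r r' : ℕ} (hr : r < loopEnd v)
    (hr' : r' < loopEnd v) (h : v r = v r') : r = r' := by
  by_contra hne
  rcases Nat.lt_or_gt_of_ne hne with hlt | hlt
  · exact Nat.notMem_of_lt_sInf hr' ⟨r, hlt, h⟩
  · exact Nat.notMem_of_lt_sInf hr ⟨r', hlt, h.symm⟩

variable [Fintype ι] (v : ℕ → ι)

lemma exists_apply_eq_apply_le_card : ∃ t ≤ Fintype.card ι, ∃ s < t, v s = v t := by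
  obtain ⟨x, y, hxy, h⟩ := Fintype.exists_ne_map_eq_of_card_lt
    (fun k : Fin (Fintype.card ι + 1) => v k) (by simp)
  rcases Fin.lt_or_lt_of_ne hxy with hlt | hlt
  · exact ⟨y, Nat.lt_succ_iff.1 y.is_lt, x, hlt, h⟩
  · exact ⟨x, Nat.lt_succ_iff.1 x.is_lt, y, hlt, h.symm⟩

lemma loopEnd_le_card : loopEnd v ≤ Fintype.card ι := by
  obtain ⟨t, ht, hrep⟩ := exists_apply_eq_apply_le_card v
  exact (Nat.sInf_le hrep).trans ht

lemma loopStart_lt_loopEnd_and_apply_eq :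
    loopStart v < loopEnd v ∧ v (loopStart v) = v (loopEnd v) := by
  obtain ⟨t, -, hrep⟩ := exists_apply_eq_apply_le_card v
  exact Nat.sInf_mem (Nat.sInf_mem ⟨t, hrep⟩ : loopEnd v ∈ {t | ∃ s < t, v s = v t})

lemma loopStart_lt_loopEnd : loopStart v < loopEnd v :=
  (loopStart_lt_loopEnd_and_apply_eq v).1

lemma apply_loopStart : v (loopStart v) = v (loopEnd v) :=
  (loopStart_lt_loopEnd_and_apply_eq v).2

lemma loopStart_add_loopLength : loopStart v + loopLength v = loopEnd v := by
  have := loopStart_lt_loopEnd v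
  rw [loopLength]
  omega

lemma apply_loopStart_add_loopLength : v (loopStart v) = v (loopStart v + loopLength v) := by
  rw [loopStart_add_loopLength, apply_loopStart v]

lemma one_le_loopLength : 1 ≤ loopLength v := by
  have := loopStart_lt_loopEnd v
  rw [loopLength]
  omega

lemma loopLength_le_card : loopLength v ≤ Fintype.card ι :=
  (Nat.sub_le _ _).trans (loopEnd_le_card v)

variable {v} in
lemma loopEnd_congr {w : ℕ → ι} {m : ℕ} (h : ∀ r ≤ m, v r = w r) (hm : loopEnd v ≤ m) :
    loopEnd w = loopEnd v := by
  have hvw : loopEnd w ≤ loopEnd v := Nat.sInf_le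
    ⟨loopStart v, loopStart_lt_loopEnd v, by
      rw [← h _ ((loopStart_lt_loopEnd v).le.trans hm), ← h _ hm, apply_loopStart v]⟩
  refine hvw.antisymm (Nat.sInf_le ⟨loopStart w, loopStart_lt_loopEnd w, ?_⟩)
  rw [h _ ((loopStart_lt_loopEnd w).le.trans (hvw.trans hm)), h _ (hvw.trans hm),
    apply_loopStart w]

end FirstLoop

section Splicing

def eraseLoop (v : ℕ → ι) (s ℓ : ℕ) : ℕ → ι := fun r => if r ≤ s then v r else v (r + ℓ)

def repeatLoop (v : ℕ → ι) (s ℓ : ℕ) : ℕ → ι := fun r => if r ≤ s + ℓ then v r else v (r - ℓ)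

variable {v w : ℕ → ι} {s ℓ r : ℕ}

lemma eraseLoop_of_le (h : r ≤ s) : eraseLoop v s ℓ r = v r := if_pos h

lemma eraseLoop_of_ge (hv : v s = v (s + ℓ)) (h : s ≤ r) : eraseLoop v s ℓ r = v (r + ℓ) := by
  rcases h.eq_or_lt with rfl | h
  · exact (if_pos le_rfl).trans hv
  · exact if_neg h.not_ge

lemma repeatLoop_of_le (h : r ≤ s + ℓ) : repeatLoop v s ℓ r = v r := if_pos h

lemma repeatLoop_add (hv : v s = v (s + ℓ)) (h : s ≤ r) : repeatLoop v s ℓ (r + ℓ) = v r := by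
  rcases h.eq_or_lt with rfl | h
  · exact (if_pos le_rfl).trans hv.symm
  · exact (if_neg (by omega)).trans (by rw [Nat.add_sub_cancel])

lemma repeatLoop_ite (v : ℕ → ι) (s ℓ r : ℕ) :
    repeatLoop v s ℓ (if r ≤ s + ℓ then r else r + ℓ) = v r := by
  split_ifs with h
  · exact repeatLoop_of_le h
  · exact (if_neg (by omega)).trans (by rw [Nat.add_sub_cancel])

lemma walkWeight_eraseLoop_mul_repeatLoop {R : Type*} [CommSemiring R] (A : Matrix ι ι R)
    {m : ℕ} (hv : v s = v (s + ℓ)) (hm : s + ℓ ≤ m) :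
    walkWeight A (m - ℓ) (eraseLoop v s ℓ) * walkWeight A (m + ℓ) (repeatLoop v s ℓ) =
      walkWeight A m v ^ 2 := by
  obtain ⟨k, rfl⟩ := Nat.exists_eq_add_of_le hm
  have hshort : walkWeight A (s + ℓ + k - ℓ) (eraseLoop v s ℓ) =
      walkWeight A s v * walkWeight A k (fun r => v (s + ℓ + r)) := by
    rw [show s + ℓ + k - ℓ = s + k by omega, walkWeight_add,
      walkWeight_congr fun r hr => eraseLoop_of_le hr]
    congr 2 with r
    rw [eraseLoop_of_ge hv (by omega), add_right_comm]
  have hlong : walkWeight A (s + ℓ + k + ℓ) (repeatLoop v s ℓ) =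
      walkWeight A (s + ℓ) v * walkWeight A ℓ (fun r => v (s + r)) *
        walkWeight A k (fun r => v (s + ℓ + r)) := by
    rw [show s + ℓ + k + ℓ = s + ℓ + ℓ + k by omega, walkWeight_add, walkWeight_add,
      walkWeight_congr fun r hr => repeatLoop_of_le hr]
    congr 3 with r
    · rw [add_comm s ℓ, add_assoc, add_comm, repeatLoop_add hv (by omega)]
    · rw [show s + ℓ + ℓ + r = s + ℓ + r + ℓ by omega, repeatLoop_add hv (by omega)]
  rw [hshort, hlong, walkWeight_add A (s + ℓ), walkWeight_add A s]
  ring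

lemma eqOn_of_eraseLoop_eqOn {m : ℕ} (hv : v s = v (s + ℓ)) (hw : w s = w (s + ℓ))
    (hm : s + ℓ ≤ m) (herase : ∀ r ≤ m - ℓ, eraseLoop v s ℓ r = eraseLoop w s ℓ r)
    (hloop : ∀ r, s < r → r < s + ℓ → v r = w r) : ∀ r ≤ m, v r = w r := by
  intro r hr
  by_cases hrs : r ≤ s
  · rw [← eraseLoop_of_le (v := v) (ℓ := ℓ) hrs, herase r (by omega), eraseLoop_of_le hrs]
  by_cases hrl : r < s + ℓ
  · exact hloop r (by omega) hrl
  · have := herase (r - ℓ) (by omega)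
    rwa [eraseLoop_of_ge hv (by omega), eraseLoop_of_ge hw (by omega),
      Nat.sub_add_cancel (by omega)] at this

lemma loopEnd_repeatLoop [Fintype ι] (v : ℕ → ι) :
    loopEnd (repeatLoop v (loopStart v) (loopLength v)) = loopEnd v :=
  loopEnd_congr (fun r hr => (repeatLoop_of_le (by rwa [loopStart_add_loopLength])).symm) le_rfl

end Splicing

section LoopDecomposition

noncomputable def shortcut (m : ℕ) (v : ℕ → ι) : ℕ → ι :=
  stopAt (m - loopLength v) (eraseLoop v (loopStart v) (loopLength v))

noncomputable def detour (m : ℕ) (v : ℕ → ι) : ℕ → ι :=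
  stopAt (m + loopLength v) (repeatLoop v (loopStart v) (loopLength v))

variable [Fintype ι] {m : ℕ} {v w : ℕ → ι}

lemma walkWeight_shortcut_mul_detour {R : Type*} [CommSemiring R] (A : Matrix ι ι R)
    (hm : loopEnd v ≤ m) :
    walkWeight A (m - loopLength v) (shortcut m v) *
        walkWeight A (m + loopLength v) (detour m v) = walkWeight A m v ^ 2 := by
  rw [shortcut, detour, walkWeight_stopAt, walkWeight_stopAt]
  exact walkWeight_eraseLoop_mul_repeatLoop A (apply_loopStart_add_loopLength v)
    (by rwa [loopStart_add_loopLength])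

variable [DecidableEq ι] {i j : ι}

lemma shortcut_mem_walks (hv : v ∈ walks m i j) (hm : loopEnd v ≤ m) :
    shortcut m v ∈ walks (m - loopLength v) i j := by
  obtain ⟨-, hi, hj⟩ := mem_walks.1 hv
  have := loopStart_add_loopLength v
  refine stopAt_mem_walks (by rwa [eraseLoop_of_le (Nat.zero_le _)]) ?_
  rwa [eraseLoop_of_ge (apply_loopStart_add_loopLength v) (by omega),
    Nat.sub_add_cancel (by omega)]

lemma detour_mem_walks (hv : v ∈ walks m i j) (hm : loopEnd v ≤ m) :
    detour m v ∈ walks (m + loopLength v) i j := by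
  obtain ⟨-, hi, hj⟩ := mem_walks.1 hv
  have := loopStart_add_loopLength v
  refine stopAt_mem_walks (by rwa [repeatLoop_of_le (Nat.zero_le _)]) ?_
  rwa [repeatLoop_add (apply_loopStart_add_loopLength v) (by omega)]

lemma eq_of_detour_eq {i' j' : ι} (hv : v ∈ walks m i j) (hw : w ∈ walks m i' j')
    (hvm : loopEnd v ≤ m) (hℓ : loopLength v = loopLength w) (h : detour m v = detour m w) :
    v = w := by
  have hagree : ∀ r ≤ m + loopLength v, repeatLoop v (loopStart v) (loopLength v) r =
      repeatLoop w (loopStart w) (loopLength w) r := fun r hr => by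
    simpa [detour, stopAt, hℓ, min_eq_left (hℓ ▸ hr)] using congrFun h r
  have hend : loopEnd w = loopEnd v := by
    rw [← loopEnd_repeatLoop v, ← loopEnd_repeatLoop w]
    exact loopEnd_congr hagree (by rw [loopEnd_repeatLoop]; omega)
  have hstart : loopStart v + loopLength v = loopStart w + loopLength w := by
    rw [loopStart_add_loopLength, loopStart_add_loopLength, hend]
  refine eq_of_mem_walks_of_eqOn hv hw fun r hr => ?_
  rw [← repeatLoop_ite v (loopStart v) (loopLength v) r,
    ← repeatLoop_ite w (loopStart w) (loopLength w) r, ← hstart, ← hℓ]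
  refine (hagree _ ?_).trans (by rw [hℓ])
  split_ifs <;> omega

/-- A walk of the fibre is determined by the inner vertices `v (s + 1), …, v (s + ℓ - 1)` of its
loop, which are distinct and differ from `u s = v s` because the loop closes at the first
repetition. -/
lemma card_le_descFactorial_of_shortcut_eq {ℓ s : ℕ} {u : ℕ → ι} {F : Finset (ℕ → ι)}
    (hF : ∀ v ∈ F, v ∈ walks (Fintype.card ι) i j ∧ loopLength v = ℓ ∧ loopStart v = s ∧
      shortcut (Fintype.card ι) v = u) :
    #F ≤ (Fintype.card ι - 1).descFactorial (ℓ - 1) := by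
  set n := Fintype.card ι
  have hloop : ∀ v ∈ F, s + ℓ = loopEnd v ∧ v s = v (s + ℓ) ∧
      ∀ r ≤ n - ℓ, eraseLoop v s ℓ r = u r := by
    intro v hv
    obtain ⟨-, rfl, rfl, rfl⟩ := hF v hv
    exact ⟨loopStart_add_loopLength v, apply_loopStart_add_loopLength v,
      fun r hr => (stopAt_of_le _ hr).symm⟩
  calc #F ≤ #{g : Fin (ℓ - 1) → ι | Function.Injective g ∧ ∀ d, g d ≠ u s} := by
        refine card_le_card_of_injOn (fun v d => v (s + 1 + d)) (fun v hv => ?_) ?_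
        · obtain ⟨hend, -, herase⟩ := hloop v hv
          have hn := loopEnd_le_card v
          have hinj (d : Fin (ℓ - 1)) {r : ℕ} (hr : r < loopEnd v)
              (h : v (s + 1 + d) = v r) : s + 1 + d = r :=
            eq_of_apply_eq_of_lt_loopEnd (by omega) hr h
          refine mem_filter.2 ⟨mem_univ _, fun d d' h => Fin.ext ?_, fun d h => ?_⟩
          · have := hinj d (by omega) h
            omega
          · rw [← herase s (by omega), eraseLoop_of_le le_rfl] at h
            have := hinj d (by have := d.2; omega) h
            omega
        · intro v hv w hw h
          obtain ⟨hend, hv_loop, hv_erase⟩ := hloop v hv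
          obtain ⟨-, hw_loop, hw_erase⟩ := hloop w hw
          have hn := loopEnd_le_card v
          refine eq_of_mem_walks_of_eqOn (hF v hv).1 (hF w hw).1
            (eqOn_of_eraseLoop_eqOn hv_loop hw_loop (by omega)
              (fun r hr => (hv_erase r hr).trans (hw_erase r hr).symm) fun r h₁ h₂ => ?_)
          have := congrFun h ⟨r - s - 1, by omega⟩
          simp only at this
          rwa [show s + 1 + (r - s - 1) = r by omega] at this
    _ = (n - 1).descFactorial (ℓ - 1) := card_injective_forall_ne _ _

lemma card_le_muBound_of_shortcut_eq {ℓ : ℕ} (hℓ : 1 ≤ ℓ) {u : ℕ → ι} {F : Finset (ℕ → ι)}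
    (hF : ∀ v ∈ F, v ∈ walks (Fintype.card ι) i j ∧ loopLength v = ℓ ∧
      shortcut (Fintype.card ι) v = u) :
    #F ≤ muBound (Fintype.card ι) ℓ := by
  rw [muBound_eq hℓ, mul_comm]
  refine (card_le_mul_card_image_of_maps_to (f := loopStart)
    (t := range (Fintype.card ι - ℓ + 1)) (fun v hv => ?_) _
    fun s _ => card_le_descFactorial_of_shortcut_eq (i := i) (j := j) (s := s) (u := u)
      fun v hv => ?_).trans (by rw [card_range])
  · obtain ⟨-, rfl, -⟩ := hF v hv
    have := loopStart_add_loopLength v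
    have := loopEnd_le_card v
    rw [mem_range]
    omega
  · obtain ⟨hvF, rfl⟩ := mem_filter.1 hv
    obtain ⟨hwalk, hℓ, hu⟩ := hF v hvF
    exact ⟨hwalk, hℓ, rfl, hu⟩

end LoopDecomposition

section Estimates

variable [Fintype ι] [DecidableEq ι] {A : Matrix ι ι ℝ} (hA : ∀ i j, 0 ≤ A i j) (i j : ι)
include hA

lemma sum_walkWeight_shortcut_le {ℓ : ℕ} (hℓ : 1 ≤ ℓ) :
    ∑ v ∈ walks (Fintype.card ι) i j with loopLength v = ℓ,
        walkWeight A (Fintype.card ι - ℓ) (shortcut (Fintype.card ι) v) ≤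
      muBound (Fintype.card ι) ℓ * (A ^ (Fintype.card ι - ℓ)) i j := by
  classical
  rw [Matrix.pow_apply_eq_sum_walkWeight]
  refine sum_comp_le_mul_sum_of_card_fiber_le (fun v hv => ?_)
    (fun u _ => card_le_muBound_of_shortcut_eq (i := i) (j := j) (u := u) hℓ fun v hv => ?_)
    (fun u _ => walkWeight_nonneg hA _ _)
  · obtain ⟨hwalk, rfl⟩ := mem_filter.1 hv
    exact shortcut_mem_walks hwalk (loopEnd_le_card v)
  · obtain ⟨hclass, rfl⟩ := mem_filter.1 hv
    exact ⟨(mem_filter.1 hclass).1, (mem_filter.1 hclass).2, rfl⟩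

lemma sum_walkWeight_detour_le (ℓ : ℕ) :
    ∑ v ∈ walks (Fintype.card ι) i j with loopLength v = ℓ,
        walkWeight A (Fintype.card ι + ℓ) (detour (Fintype.card ι) v) ≤
      (A ^ (Fintype.card ι + ℓ)) i j := by
  classical
  rw [Matrix.pow_apply_eq_sum_walkWeight]
  refine (sum_comp_le_mul_sum_of_card_fiber_le (t := walks (Fintype.card ι + ℓ) i j) (M := 1)
    (g := walkWeight A (Fintype.card ι + ℓ)) (fun v hv => ?_)
    (fun u _ => card_le_one.2 fun v hv w hw => ?_) (fun u _ => walkWeight_nonneg hA _ _)).trans_eq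
    (by rw [Nat.cast_one, one_mul])
  · obtain ⟨hwalk, rfl⟩ := mem_filter.1 hv
    exact detour_mem_walks hwalk (loopEnd_le_card v)
  · obtain ⟨hvs, rfl⟩ := mem_filter.1 hv
    obtain ⟨hws, hvw⟩ := mem_filter.1 hw
    obtain ⟨hvwalk, hvℓ⟩ := mem_filter.1 hvs
    obtain ⟨hwwalk, hwℓ⟩ := mem_filter.1 hws
    exact eq_of_detour_eq hvwalk hwwalk (loopEnd_le_card v) (hvℓ.trans hwℓ.symm) hvw.symm

lemma mul_sum_walkWeight_loopLength_eq_le {ℓ : ℕ} (hℓ : 1 ≤ ℓ) (hℓn : ℓ ≤ Fintype.card ι)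
    {a : ℝ} (ha : a ^ 2 * muBound (Fintype.card ι) ℓ ≤ 4) :
    a * ∑ v ∈ walks (Fintype.card ι) i j with loopLength v = ℓ,
        walkWeight A (Fintype.card ι) v ≤
      (A ^ (Fintype.card ι - ℓ)) i j + (A ^ (Fintype.card ι + ℓ)) i j := by
  set n := Fintype.card ι
  set μ : ℝ := (muBound n ℓ : ℝ)
  have hμ : 0 < μ := Nat.cast_pos.2 (muBound_pos hℓn)
  have hterm : ∀ v, loopLength v = ℓ → a * walkWeight A n v ≤
      walkWeight A (n - ℓ) (shortcut n v) / μ +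
        a ^ 2 * μ / 4 * walkWeight A (n + ℓ) (detour n v) := by
    rintro v rfl
    have := two_mul_mul_le_add_of_sq_eq (a * μ / 2) (walkWeight_nonneg hA _ _)
      (walkWeight_nonneg hA _ _) (walkWeight_shortcut_mul_detour A (loopEnd_le_card v)).symm
    rw [div_add' _ _ _ hμ.ne', le_div_iff₀ hμ]
    linarith
  have hdetour := sum_walkWeight_detour_le hA i j ℓ
  have hdetour_nonneg : 0 ≤ ∑ v ∈ walks n i j with loopLength v = ℓ,
      walkWeight A (n + ℓ) (detour n v) := sum_nonneg fun _ _ => walkWeight_nonneg hA _ _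
  rw [mul_sum]
  refine (sum_le_sum fun v hv => hterm v (mem_filter.1 hv).2).trans ?_
  rw [sum_add_distrib, ← sum_div, ← mul_sum]
  gcongr
  · rw [div_le_iff₀' hμ]
    exact sum_walkWeight_shortcut_le hA i j hℓ
  · nlinarith [hdetour, hdetour_nonneg]

theorem mul_pow_card_apply_le {a : ℝ}
    (ha : ∀ ℓ ∈ Icc 1 (Fintype.card ι), a ^ 2 * muBound (Fintype.card ι) ℓ ≤ 4) :
    a * (A ^ Fintype.card ι) i j ≤
      ∑ ℓ ∈ Icc 1 (Fintype.card ι),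
        ((A ^ (Fintype.card ι - ℓ)) i j + (A ^ (Fintype.card ι + ℓ)) i j) := by
  rw [Matrix.pow_apply_eq_sum_walkWeight, ← sum_fiberwise_of_maps_to (g := loopLength)
    fun v _ => mem_Icc.2 ⟨one_le_loopLength v, loopLength_le_card v⟩, mul_sum]
  exact sum_le_sum fun ℓ hℓ =>
    mul_sum_walkWeight_loopLength_eq_le hA i j (mem_Icc.1 hℓ).1 (mem_Icc.1 hℓ).2 (ha ℓ hℓ)

end Estimates

open Polynomial in
lemma pPoly_eq (n : ℕ) (a : ℝ) :
    pPoly n a = ∑ ℓ ∈ Icc 1 n, (X ^ (n - ℓ) + X ^ (n + ℓ)) - C a * X ^ n := by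
  have hlow : ∑ k ∈ range n, C (if k = n then -a else 1) * X ^ k =
      ∑ ℓ ∈ Icc 1 n, (X ^ (n - ℓ) : ℝ[X]) := by
    rw [← Finset.Ico_add_one_right_eq_Icc, sum_Ico_eq_sum_range, Nat.add_sub_cancel,
      ← sum_range_reflect]
    refine sum_congr rfl fun k hk => ?_
    rw [mem_range] at hk
    rw [if_neg (by omega), C_1, one_mul]
    congr 1
    omega
  have hhigh : ∑ k ∈ range n, C (if n + (k + 1) = n then -a else 1) * X ^ (n + (k + 1)) =
      ∑ ℓ ∈ Icc 1 n, (X ^ (n + ℓ) : ℝ[X]) := by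
    rw [← Finset.Ico_add_one_right_eq_Icc, sum_Ico_eq_sum_range, Nat.add_sub_cancel]
    exact sum_congr rfl fun k _ => by rw [if_neg (by omega), C_1, one_mul, add_comm 1 k]
  rw [pPoly, show 2 * n + 1 = n + (n + 1) by ring, sum_range_add, sum_range_succ', hlow, hhigh,
    sum_add_distrib]
  simp only [add_zero, if_true, C_neg, neg_mul]
  ring

lemma aeval_pPoly_apply [Fintype ι] [DecidableEq ι] (n : ℕ) (a : ℝ) (A : Matrix ι ι ℝ)
    (i j : ι) :
    Polynomial.aeval A (pPoly n a) i j =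
      ∑ ℓ ∈ Icc 1 n, ((A ^ (n - ℓ)) i j + (A ^ (n + ℓ)) i j) - a * (A ^ n) i j := by
  simp [pPoly_eq, Matrix.sum_apply, Algebra.algebraMap_eq_smul_one]

/-- Main theorem: if `0 < a ≤ 2/√(μ(n,k))` for all `1 ≤ k ≤ n-1`, then
`p_a ∈ 𝒫_n`. -/
theorem pPoly_mem_polyPreservesNonneg (n : ℕ) (hn : 2 ≤ n) (a : ℝ) (ha0 : 0 < a)
    (ha : ∀ k, 1 ≤ k → k ≤ n - 1 → a ≤ 2 / Real.sqrt (muBound n k)) :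
    pPoly n a ∈ polyPreservesNonneg n := by
  intro A hA i j
  rw [aeval_pPoly_apply, sub_nonneg]
  have hμ := sq_mul_muBound_le_four hn ha0.le ha
  simpa only [Fintype.card_fin] using
    mul_pow_card_apply_le hA i j (by simpa only [Fintype.card_fin] using hμ)
end

section
/- For every integer n ≥ 2 there exists a > 0 such that the polynomial p_a(x) = 1 + x + ⋯ + x^{n-1} - a x^n + x^{n+1} + ⋯ + x^{2n} belongs to 𝒫_n. -/
namespace PP

open Finset

variable {n : ℕ} (A : Matrix (Fin n) (Fin n) ℝ)

/-- weight of a walk of length `m` given by vertex sequence `f`. -/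
def wt (m : ℕ) (f : ℕ → Fin n) : ℝ := ∏ t ∈ Finset.range m, A (f t) (f (t+1))

lemma wt_nonneg (hA : ∀ i j, 0 ≤ A i j) (m : ℕ) (f : ℕ → Fin n) : 0 ≤ wt A m f :=
  Finset.prod_nonneg fun _ _ => hA _ _

lemma wt_congr {m : ℕ} {f g : ℕ → Fin n} (h : ∀ t ≤ m, f t = g t) : wt A m f = wt A m g :=
  Finset.prod_congr rfl fun t ht => by
    rw [h t (le_of_lt (mem_range.mp ht)), h (t+1) (mem_range.mp ht)]

lemma wt_add (m1 m2 : ℕ) (f : ℕ → Fin n) :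
    wt A (m1 + m2) f = wt A m1 f * wt A m2 (fun t => f (m1 + t)) := by
  unfold wt
  rw [Finset.prod_range_add]
  rfl

/-- extension of a finite tuple to `ℕ → Fin n`. -/
def extt (m : ℕ) (f : Fin (m+1) → Fin n) : ℕ → Fin n := fun t => f ⟨min t m, by omega⟩

lemma extt_le {m : ℕ} (f : Fin (m+1) → Fin n) {t : ℕ} (ht : t ≤ m) :
    extt m f t = f ⟨t, by omega⟩ := by
  simp [extt, Nat.min_eq_left ht]

lemma extt_fin {m : ℕ} (f : Fin (m+1) → Fin n) (t : Fin (m+1)) :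
    extt m f t.val = f t := by
  rw [extt_le f (Nat.lt_succ_iff.mp t.isLt)]

def Wset (m : ℕ) (i j : Fin n) : Finset (Fin (m+1) → Fin n) :=
  Finset.univ.filter fun f => f 0 = i ∧ f (Fin.last m) = j

lemma powApply (m : ℕ) (i j : Fin n) :
    (A ^ m) i j = ∑ f ∈ Wset m i j, wt A m (extt m f) := by
  induction m generalizing j with
  | zero =>
      have hW : Wset (n := n) 0 i j = if i = j then {fun _ => i} else ∅ := by
        ext f
        simp only [Wset, mem_filter, mem_univ, true_and]
        have hlast : Fin.last 0 = 0 := rfl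
        constructor
        · rintro ⟨h0, h1⟩
          rw [hlast, h0] at h1
          subst h1
          rw [if_pos rfl, mem_singleton]
          funext x
          have hx : x = 0 := Fin.ext (by omega)
          rw [hx, h0]
        · intro hf
          by_cases hij : i = j
          · rw [if_pos hij, mem_singleton] at hf
            subst hf
            exact ⟨rfl, hij⟩
          · rw [if_neg hij] at hf
            exact absurd hf (Finset.notMem_empty _)
      rw [hW, pow_zero, Matrix.one_apply]
      split_ifs with h
      · simp [wt]
      · simp
  | succ m ih =>
      rw [pow_succ, Matrix.mul_apply]
      simp_rw [ih, Finset.sum_mul]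
      rw [Finset.sum_sigma']
      refine Finset.sum_bij' (fun x _ => Fin.snoc x.2 j)
        (fun g _ => (⟨g (Fin.castSucc (Fin.last m)), Fin.init g⟩ :
          Σ _ : Fin n, Fin (m+1) → Fin n)) ?_ ?_ ?_ ?_ ?_
      · intro x hx
        simp only [Finset.mem_sigma, Wset, mem_filter, mem_univ, true_and] at hx ⊢
        constructor
        · rw [← Fin.castSucc_zero, Fin.snoc_castSucc, hx.1]
        · rw [Fin.snoc_last]
      · intro g hg
        simp only [Finset.mem_sigma, Wset, mem_filter, mem_univ, true_and] at hg ⊢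
        exact ⟨hg.1, rfl⟩
      · rintro ⟨v, f⟩ hx
        simp only [Finset.mem_sigma, Wset, mem_filter, mem_univ, true_and] at hx
        simp only [Fin.snoc_castSucc, Fin.init_snoc]
        rw [hx.2]
      · intro g hg
        simp only [Wset, mem_filter, mem_univ, true_and] at hg
        show Fin.snoc (Fin.init g) j = g
        rw [← hg.2]
        exact Fin.snoc_init_self g
      · intro x hx
        simp only [Finset.mem_sigma, Wset, mem_filter, mem_univ, true_and] at hx
        have hsplit : wt A (m+1) (extt (m+1) (Fin.snoc x.2 j)) =
            wt A m (extt (m+1) (Fin.snoc x.2 j)) *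
              A (extt (m+1) (Fin.snoc x.2 j) m) (extt (m+1) (Fin.snoc x.2 j) (m+1)) := by
          unfold wt
          rw [Finset.prod_range_succ]
        rw [hsplit]
        have hmid : ∀ t ≤ m, extt (m+1) (Fin.snoc x.2 j) t = extt m x.2 t := by
          intro t ht
          rw [extt_le _ (by omega), extt_le _ ht]
          have : (⟨t, by omega⟩ : Fin (m+2)) = Fin.castSucc ⟨t, by omega⟩ := rfl
          rw [this, Fin.snoc_castSucc]
        have h1 : extt (m+1) (Fin.snoc x.2 j) m = x.1 := by
          rw [hmid m le_rfl, extt_le _ le_rfl]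
          exact hx.2
        have h2 : extt (m+1) (Fin.snoc x.2 j) (m+1) = j := by
          rw [extt_le _ le_rfl]
          have : (⟨m+1, by omega⟩ : Fin (m+2)) = Fin.last (m+1) := rfl
          rw [this, Fin.snoc_last]
        rw [h1, h2, wt_congr A hmid]

-- pigeonhole
lemma exists_rep (f : Fin (n+1) → Fin n) :
    ∃ p : ℕ × ℕ, 1 ≤ p.2 ∧ p.1 + p.2 ≤ n ∧ extt n f p.1 = extt n f (p.1 + p.2) := by
  obtain ⟨a, b, hab, hfab⟩ := Fintype.exists_ne_map_eq_of_card_lt f (by simp)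
  rcases Nat.lt_or_ge a.val b.val with h | h
  · refine ⟨(a.val, b.val - a.val), by omega, by omega, ?_⟩
    rw [extt_le f (by omega), extt_le f (by omega)]
    have h2 : (⟨a.val + (b.val - a.val), by omega⟩ : Fin (n+1)) = b := Fin.ext (by simp; omega)
    have h1 : (⟨a.val, by omega⟩ : Fin (n+1)) = a := Fin.ext rfl
    rw [h1, h2, hfab]
  · have h' : b.val < a.val := by
      rcases Nat.lt_or_ge b.val a.val with h' | h'
      · exact h'
      · exact absurd (Fin.ext (le_antisymm h' h) : a = b) hab
    refine ⟨(b.val, a.val - b.val), by omega, by omega, ?_⟩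
    rw [extt_le f (by omega), extt_le f (by omega)]
    have h2 : (⟨b.val + (a.val - b.val), by omega⟩ : Fin (n+1)) = a := Fin.ext (by simp; omega)
    have h1 : (⟨b.val, by omega⟩ : Fin (n+1)) = b := Fin.ext rfl
    rw [h1, h2, hfab]

noncomputable def pick (f : Fin (n+1) → Fin n) : ℕ × ℕ := (exists_rep f).choose

lemma pick_spec (f : Fin (n+1) → Fin n) :
    1 ≤ (pick f).2 ∧ (pick f).1 + (pick f).2 ≤ n ∧
      extt n f (pick f).1 = extt n f ((pick f).1 + (pick f).2) :=
  (exists_rep f).choose_spec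

-- surgery
variable (s k : ℕ)

def Sext (f : Fin (n+1) → Fin n) : ℕ → Fin n :=
  fun t => if t < s then extt n f t else extt n f (t + k)
def Sfin (f : Fin (n+1) → Fin n) : Fin (n - k + 1) → Fin n := fun t => Sext s k f t.val
def Lext (f : Fin (n+1) → Fin n) : ℕ → Fin n :=
  fun t => if t < s + k then extt n f t else extt n f (t - k)
def Lfin (f : Fin (n+1) → Fin n) : Fin (n + k + 1) → Fin n := fun t => Lext s k f t.val
def cyc (f : Fin (n+1) → Fin n) : Fin k → Fin n := fun u => extt n f (s + 1 + u.val)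

variable {s k} {f : Fin (n+1) → Fin n}
  (hk : 1 ≤ k) (hskn : s + k ≤ n) (hcyc : extt n f s = extt n f (s + k))

include hk hskn hcyc in
lemma amgm (hA : ∀ i j, 0 ≤ A i j) :
    2 * wt A n (extt n f) ≤
      wt A (n - k) (extt (n - k) (Sfin s k f)) + wt A (n + k) (extt (n + k) (Lfin s k f)) := by
  set F := extt n f with hF
  set r := n - (s + k) with hr
  have hn : n = s + (k + r) := by omega
  set u1 := wt A s F with hu1
  set c := wt A k (fun t => F (s + t)) with hc
  set w2 := wt A r (fun t => F (s + (k + t))) with hw2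
  -- full walk
  have h1 : wt A n F = u1 * (c * w2) := by
    have := wt_add A s (k + r) F
    rw [← hn] at this
    rw [this, wt_add A k r]
  -- short walk
  have h2 : wt A (n - k) (extt (n - k) (Sfin s k f)) = u1 * w2 := by
    have e1 : wt A (n - k) (extt (n - k) (Sfin s k f)) = wt A (n - k) (Sext s k f) := by
      refine wt_congr A fun t ht => ?_
      rw [extt_le _ ht]
      rfl
    have hnk : n - k = s + r := by omega
    rw [e1, hnk, wt_add]
    congr 1
    · refine wt_congr A fun t ht => ?_
      unfold Sext
      rcases Nat.lt_or_ge t s with h | h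
      · rw [if_pos h]
      · have hts : t = s := by omega
        rw [hts, if_neg (by omega)]
        exact hcyc.symm
    · refine wt_congr A fun t ht => ?_
      unfold Sext
      rw [if_neg (by omega)]
      congr 1
      omega
  -- long walk
  have h3 : wt A (n + k) (extt (n + k) (Lfin s k f)) = u1 * (c * (c * w2)) := by
    have e1 : wt A (n + k) (extt (n + k) (Lfin s k f)) = wt A (n + k) (Lext s k f) := by
      refine wt_congr A fun t ht => ?_
      rw [extt_le _ ht]
      rfl
    have hnk : n + k = s + (k + (k + r)) := by omega
    rw [e1, hnk, wt_add, wt_add, wt_add]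
    congr 1
    · refine wt_congr A fun t ht => ?_
      unfold Lext
      rw [if_pos (by omega)]
    congr 1
    · refine wt_congr A fun t ht => ?_
      show Lext s k f (s + t) = F (s + t)
      unfold Lext
      rcases Nat.lt_or_ge (s + t) (s + k) with h | h
      · rw [if_pos h]
      · have hts : t = k := by omega
        rw [if_neg (by omega), hts]
        have : s + k - k = s := by omega
        rw [this]
        exact hcyc
    congr 1
    · refine wt_congr A fun t ht => ?_
      show Lext s k f (s + (k + t)) = F (s + t)
      unfold Lext
      rw [if_neg (by omega)]
      congr 1
      omega
    · refine wt_congr A fun t ht => ?_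
      show Lext s k f (s + (k + (k + t))) = F (s + (k + t))
      unfold Lext
      rw [if_neg (by omega)]
      congr 1
      omega
  rw [h1, h2, h3]
  have hu1n : 0 ≤ u1 := Finset.prod_nonneg fun _ _ => hA _ _
  have hw2n : 0 ≤ w2 := Finset.prod_nonneg fun _ _ => hA _ _
  nlinarith [mul_nonneg (mul_nonneg hu1n hw2n) (sq_nonneg (c - 1))]


section Surgery
variable {s k : ℕ} {i j : Fin n} {f : Fin (n+1) → Fin n}

lemma Sfin_mem (hk : 1 ≤ k) (hskn : s + k ≤ n)
    (hcyc : extt n f s = extt n f (s + k)) (hf : f ∈ Wset n i j) :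
    Sfin s k f ∈ Wset (n - k) i j := by
  simp only [Wset, mem_filter, mem_univ, true_and] at hf ⊢
  constructor
  · show Sext s k f (0 : Fin (n - k + 1)).val = i
    have h0 : ((0 : Fin (n - k + 1)).val) = 0 := rfl
    rw [h0]
    unfold Sext
    rcases Nat.eq_zero_or_pos s with hs | hs
    · rw [if_neg (by omega)]
      have e : (0 : ℕ) + k = s + k := by omega
      rw [e, ← hcyc, hs, extt_le f (by omega)]
      exact hf.1
    · rw [if_pos hs, extt_le f (by omega)]
      exact hf.1
  · show Sext s k f (Fin.last (n - k)).val = j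
    have hl : (Fin.last (n - k)).val = n - k := rfl
    rw [hl]
    unfold Sext
    rw [if_neg (by omega)]
    have e : n - k + k = n := by omega
    rw [e, extt_le f le_rfl]
    exact hf.2

lemma Lfin_mem (hk : 1 ≤ k) (hskn : s + k ≤ n)
    (hf : f ∈ Wset n i j) :
    Lfin s k f ∈ Wset (n + k) i j := by
  simp only [Wset, mem_filter, mem_univ, true_and] at hf ⊢
  constructor
  · show Lext s k f (0 : Fin (n + k + 1)).val = i
    have h0 : ((0 : Fin (n + k + 1)).val) = 0 := rfl
    rw [h0]
    unfold Lext
    rw [if_pos (by omega), extt_le f (by omega)]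
    exact hf.1
  · show Lext s k f (Fin.last (n + k)).val = j
    have hl : (Fin.last (n + k)).val = n + k := rfl
    rw [hl]
    unfold Lext
    rw [if_neg (by omega)]
    have e : n + k - k = n := by omega
    rw [e, extt_le f le_rfl]
    exact hf.2

lemma fin_eq_of_extt {f g : Fin (n+1) → Fin n}
    (h : ∀ t ≤ n, extt n f t = extt n g t) : f = g := by
  funext t
  have := h t.val (Nat.lt_succ_iff.mp t.isLt)
  rwa [extt_le f (Nat.lt_succ_iff.mp t.isLt), extt_le g (Nat.lt_succ_iff.mp t.isLt)] at this

lemma S_inj (hk : 1 ≤ k) (hskn : s + k ≤ n)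
    {f g : Fin (n+1) → Fin n}
    (hcf : extt n f s = extt n f (s + k)) (hcg : extt n g s = extt n g (s + k))
    (hcycEq : cyc s k f = cyc s k g) (hS : Sfin s k f = Sfin s k g) : f = g := by
  have hSx : ∀ x ≤ n - k, Sext s k f x = Sext s k g x := by
    intro x hx
    exact congrFun hS ⟨x, by omega⟩
  refine fin_eq_of_extt fun t ht => ?_
  rcases Nat.lt_or_ge t (s + 1) with h1 | h1
  · -- t ≤ s
    have := hSx t (by omega)
    unfold Sext at this
    rcases Nat.lt_or_ge t s with h2 | h2
    · rwa [if_pos h2, if_pos h2] at this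
    · have hts : t = s := by omega
      rw [hts, if_neg (by omega), if_neg (by omega)] at this
      rw [hts, hcf, hcg]
      exact this
  · rcases Nat.lt_or_ge t (s + k) with h2 | h2
    · -- s < t < s + k : use cyc
      have := congrFun hcycEq ⟨t - s - 1, by omega⟩
      unfold cyc at this
      simp only at this
      have e : s + 1 + (t - s - 1) = t := by omega
      rwa [e] at this
    · rcases Nat.eq_or_lt_of_le h2 with h3 | h3
      · -- t = s + k
        rw [← h3]
        have := hSx s (by omega)
        unfold Sext at this
        rwa [if_neg (by omega), if_neg (by omega)] at this
      · -- t > s + k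
        have := hSx (t - k) (by omega)
        unfold Sext at this
        rw [if_neg (by omega), if_neg (by omega)] at this
        have e : t - k + k = t := by omega
        rwa [e] at this

lemma L_inj (hk : 1 ≤ k) (hskn : s + k ≤ n)
    {f g : Fin (n+1) → Fin n}
    (hcf : extt n f s = extt n f (s + k)) (hcg : extt n g s = extt n g (s + k))
    (hL : Lfin s k f = Lfin s k g) : f = g := by
  have hLx : ∀ x ≤ n + k, Lext s k f x = Lext s k g x := by
    intro x hx
    exact congrFun hL ⟨x, by omega⟩
  refine fin_eq_of_extt fun t ht => ?_
  rcases Nat.lt_or_ge t (s + k) with h1 | h1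
  · have := hLx t (by omega)
    unfold Lext at this
    rwa [if_pos h1, if_pos h1] at this
  · have := hLx (t + k) (by omega)
    unfold Lext at this
    rw [if_neg (by omega), if_neg (by omega)] at this
    have e : t + k - k = t := by omega
    rwa [e] at this

end Surgery

lemma pow_entry_nonneg (hA : ∀ i j, 0 ≤ A i j) (m : ℕ) (i j : Fin n) :
    0 ≤ (A ^ m) i j := by
  rw [powApply]
  exact sum_nonneg fun f _ => Finset.prod_nonneg fun _ _ => hA _ _

set_option maxHeartbeats 1000000 in
lemma key (hA : ∀ i j, 0 ≤ A i j) (hn1 : 1 ≤ n) (i j : Fin n) :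
    2 * (A ^ n) i j ≤
      (((n : ℝ) + 1)^2 * ((n : ℝ)^n + 1)) * ∑ m ∈ (range (2*n+1)).erase n, (A ^ m) i j := by
  set Q := ∑ m ∈ (range (2*n+1)).erase n, (A ^ m) i j with hQdef
  have hQ : 0 ≤ Q := sum_nonneg fun m _ => pow_entry_nonneg A hA m i j
  have hPle : ∀ m ∈ (range (2*n+1)).erase n, (A ^ m) i j ≤ Q :=
    fun m hm => Finset.single_le_sum (fun m _ => pow_entry_nonneg A hA m i j) hm
  set C := (n : ℝ)^n + 1 with hCdef
  have hnn : (0:ℝ) ≤ (n:ℝ) := Nat.cast_nonneg n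
  have hC0 : 0 ≤ C := by positivity
  have hpairs : ∀ f ∈ Wset n i j, pick f ∈ range (n+1) ×ˢ range (n+1) := by
    intro f _
    have hs := pick_spec f
    simp only [mem_product, mem_range]
    omega
  rw [powApply, ← Finset.sum_fiberwise_of_maps_to hpairs]
  have hper : ∀ p ∈ range (n+1) ×ˢ range (n+1),
      2 * ∑ f ∈ (Wset n i j).filter (fun f => pick f = p), wt A n (extt n f) ≤ C * Q := by
    rintro ⟨s, k⟩ _
    set fib := (Wset n i j).filter (fun f => pick f = (s, k)) with hfib
    rcases fib.eq_empty_or_nonempty with he | ⟨f0, hf0⟩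
    · rw [he]
      simpa using mul_nonneg hC0 hQ
    · have hf0' := mem_filter.mp hf0
      have hspec := pick_spec f0
      rw [hf0'.2] at hspec
      have hk : 1 ≤ k := hspec.1
      have hskn : s + k ≤ n := hspec.2.1
      have hcycf : ∀ f ∈ fib, extt n f s = extt n f (s + k) := by
        intro f hf
        have h := pick_spec f
        rw [(mem_filter.mp hf).2] at h
        exact h.2.2
      have hmemf : ∀ f ∈ fib, f ∈ Wset n i j := fun f hf => (mem_filter.mp hf).1
      have step1 : 2 * ∑ f ∈ fib, wt A n (extt n f) ≤
          (∑ f ∈ fib, wt A (n-k) (extt (n-k) (Sfin s k f))) +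
          (∑ f ∈ fib, wt A (n+k) (extt (n+k) (Lfin s k f))) := by
        rw [Finset.mul_sum, ← Finset.sum_add_distrib]
        exact Finset.sum_le_sum fun f hf => amgm A hk hskn (hcycf f hf) hA
      have hshort : (∑ f ∈ fib, wt A (n-k) (extt (n-k) (Sfin s k f))) ≤ (n:ℝ)^n * Q := by
        have hinj : ∀ f1 ∈ fib, ∀ f2 ∈ fib,
            (fun f => ((cyc s k f, Sfin s k f) : (Fin k → Fin n) × (Fin (n-k+1) → Fin n))) f1 =
            (fun f => ((cyc s k f, Sfin s k f) : (Fin k → Fin n) × (Fin (n-k+1) → Fin n))) f2 →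
            f1 = f2 := by
          intro f1 h1 f2 h2 heq
          simp only [Prod.mk.injEq] at heq
          exact S_inj hk hskn (hcycf f1 h1) (hcycf f2 h2) heq.1 heq.2
        have himg := Finset.sum_image (s := fib)
          (g := fun f => ((cyc s k f, Sfin s k f) : (Fin k → Fin n) × (Fin (n-k+1) → Fin n)))
          (f := fun p => wt A (n-k) (extt (n-k) p.2)) hinj
        rw [← himg]
        have hsub : fib.image (fun f => ((cyc s k f, Sfin s k f) :
            (Fin k → Fin n) × (Fin (n-k+1) → Fin n))) ⊆ univ ×ˢ Wset (n-k) i j := by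
          intro p hp
          obtain ⟨f, hf, rfl⟩ := Finset.mem_image.mp hp
          exact mem_product.mpr ⟨mem_univ _, Sfin_mem hk hskn (hcycf f hf) (hmemf f hf)⟩
        refine le_trans (Finset.sum_le_sum_of_subset_of_nonneg hsub fun p _ _ =>
          Finset.prod_nonneg fun _ _ => hA _ _) ?_
        rw [Finset.sum_product]
        simp only []
        rw [Finset.sum_const, Finset.card_univ, nsmul_eq_mul, ← powApply]
        have hcard : (Fintype.card (Fin k → Fin n) : ℝ) = (n:ℝ)^k := by
          rw [Fintype.card_fun, Fintype.card_fin, Fintype.card_fin]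
          push_cast
          ring
        rw [hcard]
        refine mul_le_mul ?_ ?_ (pow_entry_nonneg A hA _ i j) (by positivity)
        · exact pow_le_pow_right₀ (by exact_mod_cast hn1) (by omega)
        · exact hPle _ (by simp only [mem_erase, mem_range]; omega)
      have hlong : (∑ f ∈ fib, wt A (n+k) (extt (n+k) (Lfin s k f))) ≤ Q := by
        have hinj : ∀ f1 ∈ fib, ∀ f2 ∈ fib, Lfin s k f1 = Lfin s k f2 → f1 = f2 :=
          fun f1 h1 f2 h2 heq => L_inj hk hskn (hcycf f1 h1) (hcycf f2 h2) heq
        have himg := Finset.sum_image (s := fib) (g := fun f => Lfin s k f)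
          (f := fun g => wt A (n+k) (extt (n+k) g)) hinj
        rw [← himg]
        have hsub : fib.image (fun f => Lfin s k f) ⊆ Wset (n+k) i j := by
          intro p hp
          obtain ⟨f, hf, rfl⟩ := Finset.mem_image.mp hp
          exact Lfin_mem hk hskn (hmemf f hf)
        refine le_trans (Finset.sum_le_sum_of_subset_of_nonneg hsub fun p _ _ =>
          Finset.prod_nonneg fun _ _ => hA _ _) ?_
        rw [← powApply]
        exact hPle _ (by simp only [mem_erase, mem_range]; omega)
      calc 2 * ∑ f ∈ fib, wt A n (extt n f) ≤ _ := step1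
        _ ≤ (n:ℝ)^n * Q + Q := add_le_add hshort hlong
        _ = C * Q := by rw [hCdef]; ring
  calc 2 * ∑ p ∈ range (n+1) ×ˢ range (n+1),
        ∑ f ∈ (Wset n i j).filter (fun f => pick f = p), wt A n (extt n f)
      = ∑ p ∈ range (n+1) ×ˢ range (n+1),
        2 * ∑ f ∈ (Wset n i j).filter (fun f => pick f = p), wt A n (extt n f) := by
        rw [Finset.mul_sum]
    _ ≤ ∑ _p ∈ range (n+1) ×ˢ range (n+1), C * Q := Finset.sum_le_sum hper
    _ = (((n:ℝ)+1)^2 * C) * Q := by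
        rw [Finset.sum_const, nsmul_eq_mul, Finset.card_product, Finset.card_range]
        push_cast
        ring

end PP

/-- For every `n ≥ 2` there exists `a > 0` with `p_a ∈ 𝒫_n`. -/
theorem exists_pos_pPoly_mem (n : ℕ) (hn : 2 ≤ n) :
    ∃ a : ℝ, 0 < a ∧ pPoly n a ∈ polyPreservesNonneg n := by
  have hnn : (0:ℝ) ≤ (n:ℝ) := Nat.cast_nonneg n
  set D : ℝ := ((n : ℝ) + 1)^2 * ((n : ℝ)^n + 1) with hD
  have hDpos : 0 < D := by positivity
  refine ⟨2 / D, by positivity, ?_⟩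
  intro A hA i j
  have hkey := PP.key A hA (by omega) i j
  have hentry : (Polynomial.aeval A) (pPoly n (2 / D)) i j =
      ∑ m ∈ Finset.range (2*n+1), (if m = n then -(2/D) else 1) * (A ^ m) i j := by
    unfold pPoly
    rw [map_sum, Matrix.sum_apply]
    refine Finset.sum_congr rfl fun m _ => ?_
    rw [map_mul, Polynomial.aeval_C, map_pow, Polynomial.aeval_X,
      Algebra.algebraMap_eq_smul_one, smul_mul_assoc, one_mul, Matrix.smul_apply,
      smul_eq_mul]
  rw [hentry]
  have hmemn : n ∈ Finset.range (2*n+1) := Finset.mem_range.mpr (by omega)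
  rw [← Finset.sum_erase_add _ _ hmemn, if_pos rfl]
  have herase : ∑ m ∈ (Finset.range (2*n+1)).erase n,
      (if m = n then -(2/D) else 1) * (A ^ m) i j
      = ∑ m ∈ (Finset.range (2*n+1)).erase n, (A ^ m) i j := by
    refine Finset.sum_congr rfl fun m hm => ?_
    rw [if_neg (Finset.mem_erase.mp hm).1, one_mul]
  rw [herase]
  set Q := ∑ m ∈ (Finset.range (2*n+1)).erase n, (A ^ m) i j with hQ
  have h2 : 2 / D * (A ^ n) i j ≤ Q := by
    rw [div_mul_eq_mul_div, div_le_iff₀ hDpos]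
    calc 2 * (A ^ n) i j ≤ D * Q := hkey
      _ = Q * D := mul_comm _ _
  linarith
end

section
/- For every integer n ≥ 2 and every a > 0, the polynomial p_a(x) = 1 + x + ⋯ + x^{n-1} - a x^n + x^{n+1} + ⋯ + x^{2n} does not belong to 𝒫_{n+1}. -/
noncomputable def Jmat (n : ℕ) : Matrix (Fin (n+1)) (Fin (n+1)) ℝ :=
  fun i j => if (j : ℕ) = (i : ℕ) + 1 then 1 else 0

lemma Jmat_pow (n k : ℕ) (i j : Fin (n+1)) :
    ((Jmat n) ^ k) i j = if (j : ℕ) = (i : ℕ) + k then 1 else 0 := by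
  induction k generalizing i j with
  | zero =>
    simp [Matrix.one_apply, eq_comm, Fin.ext_iff]
  | succ k ih =>
    rw [pow_succ, Matrix.mul_apply]
    by_cases h : (i : ℕ) + k < n + 1
    · rw [Finset.sum_eq_single (⟨(i : ℕ) + k, h⟩ : Fin (n+1))]
      · rw [ih]
        simp [Jmat, add_assoc]
      · intro m _ hm
        rw [ih]
        have : (m : ℕ) ≠ (i : ℕ) + k := fun hc => hm (Fin.ext hc)
        simp [this]
      · simp
    · have h1 : ∀ m : Fin (n+1), ((Jmat n) ^ k) i m = 0 := by
        intro m
        rw [ih]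
        have : (m : ℕ) ≠ (i : ℕ) + k := by omega
        simp [this]
      have h2 : (j : ℕ) ≠ (i : ℕ) + (k + 1) := by omega
      simp [h1, h2]

/-- For every `n ≥ 2` and every `a > 0`, `p_a ∉ 𝒫_{n+1}`. -/
theorem pPoly_not_mem_succ (n : ℕ) (hn : 2 ≤ n) (a : ℝ) (ha : 0 < a) :
    pPoly n a ∉ polyPreservesNonneg (n + 1) := by
  intro hmem
  have hJ : ∀ i j, (0:ℝ) ≤ Jmat n i j := by
    intro i j; unfold Jmat; split <;> norm_num
  have hlt : n < n + 1 := Nat.lt_succ_self n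
  have := hmem (Jmat n) hJ 0 ⟨n, hlt⟩
  rw [pPoly, map_sum] at this
  have key : ∀ k ∈ Finset.range (2 * n + 1),
      (Polynomial.aeval (Jmat n)) (Polynomial.C (if k = n then -a else 1)
        * Polynomial.X ^ k) 0 (⟨n, hlt⟩ : Fin (n+1))
      = if k = n then -a else 0 := by
    intro k hk
    rw [map_mul, map_pow, Polynomial.aeval_X, Polynomial.aeval_C,
      Algebra.algebraMap_eq_smul_one, smul_mul_assoc, one_mul,
      Matrix.smul_apply, Jmat_pow]
    have h0 : ((0 : Fin (n+1)) : ℕ) = 0 := rfl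
    by_cases hkn : k = n
    · subst hkn; simp [h0]
    · have : ((⟨n, hlt⟩ : Fin (n+1)) : ℕ) ≠ ((0 : Fin (n+1)) : ℕ) + k := by
        simp [h0]; omega
      simp [hkn, this]
      omega
  rw [Matrix.sum_apply, Finset.sum_congr rfl key, Finset.sum_ite_eq'] at this
  simp [Nat.lt_succ_iff, show n < 2 * n + 1 by omega] at this
  linarith
end

section
/- For every integer n ≥ 2, the inclusion 𝒫_{n+1} ⊊ 𝒫_n is strict: there exists a polynomial p ∈ 𝒫_n with p ∉ 𝒫_{n+1}. -/
open Finset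

namespace CP

variable {n : ℕ}

/-- extension of a finite tuple to `ℕ → Fin n`, constant beyond `m`. -/
def ext (m : ℕ) (f : Fin (m+1) → Fin n) : ℕ → Fin n :=
  fun t => f ⟨min t m, Nat.lt_succ_of_le (Nat.min_le_right t m)⟩

lemma ext_injective (m : ℕ) : Function.Injective (ext (n := n) m) := by
  intro f g h
  funext x
  have hx : min (x : ℕ) m = (x : ℕ) := Nat.min_eq_left (Nat.le_of_lt_succ x.isLt)
  have := congrFun h (x : ℕ)
  simp only [ext] at this
  simpa [hx] using this

/-- walks of length `m` from `i` to `j`, encoded as functions `ℕ → Fin n`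
constant from `m` on. -/
def walks (m : ℕ) (i j : Fin n) : Finset (ℕ → Fin n) :=
  (Finset.univ.map ⟨ext m, ext_injective m⟩).filter (fun g => g 0 = i ∧ g m = j)

lemma mem_walks {m : ℕ} {i j : Fin n} {g : ℕ → Fin n} :
    g ∈ walks m i j ↔ (∀ t, m ≤ t → g t = g m) ∧ g 0 = i ∧ g m = j := by
  constructor
  · intro hg
    rw [walks, Finset.mem_filter] at hg
    obtain ⟨hmem, h0, hm⟩ := hg
    refine ⟨?_, h0, hm⟩
    rw [Finset.mem_map] at hmem
    obtain ⟨f, -, hf⟩ := hmem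
    intro t ht
    have h1 : g t = f ⟨min t m, Nat.lt_succ_of_le (Nat.min_le_right t m)⟩ :=
      (congrFun hf t).symm
    have h2 : g m = f ⟨min m m, Nat.lt_succ_of_le (Nat.min_le_right m m)⟩ :=
      (congrFun hf m).symm
    rw [h1, h2]
    congr 1
    simp [Nat.min_eq_right ht]
  · rintro ⟨hstab, h0, hm⟩
    rw [walks, Finset.mem_filter]
    refine ⟨?_, h0, hm⟩
    rw [Finset.mem_map]
    refine ⟨fun x => g x, Finset.mem_univ _, ?_⟩
    funext t
    simp only [Function.Embedding.coeFn_mk, ext]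
    rcases le_or_gt t m with h | h
    · congr 1
      simp [Nat.min_eq_left h]
    · have : min t m = m := Nat.min_eq_right h.le
      rw [this]
      exact (hstab t h.le).symm

variable (A : Matrix (Fin n) (Fin n) ℝ)

/-- weight of a walk of length m -/
def wt (m : ℕ) (g : ℕ → Fin n) : ℝ := ∏ t ∈ Finset.range m, A (g t) (g (t+1))

lemma wt_nonneg (hA : ∀ i j, 0 ≤ A i j) (m : ℕ) (g : ℕ → Fin n) : 0 ≤ wt A m g :=
  Finset.prod_nonneg fun _ _ => hA _ _

lemma pow_apply_eq (m : ℕ) (i j : Fin n) :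
    (A ^ m) i j = ∑ g ∈ walks m i j, wt A m g := by
  induction m generalizing j with
  | zero =>
    rcases eq_or_ne i j with rfl | hij
    · have : walks (n := n) 0 i i = {fun _ => i} := by
        ext g
        simp only [mem_walks, Finset.mem_singleton]
        constructor
        · rintro ⟨hs, h0, -⟩
          funext t
          rw [hs t (Nat.zero_le t), h0]
        · rintro rfl
          exact ⟨fun _ _ => rfl, rfl, rfl⟩
      rw [this, Finset.sum_singleton]
      simp [wt, Matrix.one_apply]
    · have : walks (n := n) 0 i j = ∅ := by
        ext g
        simp only [mem_walks, Finset.notMem_empty, iff_false]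
        rintro ⟨-, h0, hm⟩
        exact hij (h0 ▸ hm ▸ rfl)
      rw [this, Finset.sum_empty]
      simp [Matrix.one_apply, hij]
  | succ m ih =>
    rw [pow_succ, Matrix.mul_apply]
    have step : ∀ k, (A ^ m) i k * A k j = ∑ g ∈ walks m i k, wt A m g * A k j := by
      intro k; rw [ih k, Finset.sum_mul]
    simp only [step]
    rw [Finset.sum_sigma' Finset.univ (fun k => walks m i k)
      (fun k g => wt A m g * A k j)]
    refine Finset.sum_nbij' (i := fun x => fun t => if t ≤ m then x.2 t else j)
      (j := fun g => ⟨g m, fun t => g (min t m)⟩) ?_ ?_ ?_ ?_ ?_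
    · rintro ⟨k, g⟩ hx
      simp only [Finset.mem_sigma, Finset.mem_univ, true_and] at hx
      show (fun t => if t ≤ m then g t else j) ∈ walks (m+1) i j
      rw [mem_walks] at hx ⊢
      obtain ⟨hs, h0, hm⟩ := hx
      refine ⟨?_, by simpa using h0, by simp⟩
      intro t ht
      have h1 : ¬ t ≤ m := by omega
      have h2 : ¬ m + 1 ≤ m := by omega
      simp [h1, h2]
    · intro g hg
      simp only [Finset.mem_sigma, Finset.mem_univ, true_and]
      rw [mem_walks] at hg ⊢
      obtain ⟨hs, h0, hm⟩ := hg
      refine ⟨?_, by simpa using h0, by simp⟩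
      intro t ht
      simp [Nat.min_eq_right ht]
    · rintro ⟨k, g⟩ hx
      simp only [Finset.mem_sigma, Finset.mem_univ, true_and] at hx
      rw [mem_walks] at hx
      obtain ⟨hs, h0, hm⟩ := hx
      have h1 : (fun t => if t ≤ m then g t else j) m = k := by simp [hm]
      refine Sigma.ext ?_ ?_
      · simpa using h1
      · refine heq_of_eq ?_
        funext t
        have hmin : min t m ≤ m := Nat.min_le_right t m
        simp only [hmin, if_pos]
        rcases le_or_gt t m with h | h
        · rw [Nat.min_eq_left h]
        · rw [Nat.min_eq_right h.le]
          exact (hs t h.le).symm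
    · intro g hg
      rw [mem_walks] at hg
      obtain ⟨hs, h0, hm⟩ := hg
      funext t
      rcases le_or_gt t m with h | h
      · simp [h, Nat.min_eq_left h]
      · have h' : ¬ t ≤ m := by omega
        simp only [h', if_neg, not_false_iff]
        have : m + 1 ≤ t := h
        rw [← hm]
        exact (hs t this).symm ▸ rfl
    · rintro ⟨k, g⟩ hx
      simp only [Finset.mem_sigma, Finset.mem_univ, true_and] at hx
      rw [mem_walks] at hx
      obtain ⟨hs, h0, hm⟩ := hx
      show wt A m g * A k j = wt A (m+1) _
      rw [wt, wt, Finset.prod_range_succ]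
      have e1 : ∀ t ∈ Finset.range m,
          A ((fun t => if t ≤ m then g t else j) t) ((fun t => if t ≤ m then g t else j) (t+1))
          = A (g t) (g (t+1)) := by
        intro t ht
        rw [Finset.mem_range] at ht
        have h1 : t ≤ m := ht.le
        have h2 : t + 1 ≤ m := ht
        simp [h1, h2]
      rw [Finset.prod_congr rfl e1]
      have h3 : (m:ℕ) ≤ m := le_refl m
      have h4 : ¬ (m + 1 ≤ m) := by omega
      simp [h3, h4, hm]

lemma pow_entry_nonneg (hA : ∀ i j, 0 ≤ A i j) (m : ℕ) (i j : Fin n) :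
    0 ≤ (A ^ m) i j := by
  rw [pow_apply_eq]
  exact Finset.sum_nonneg fun g _ => wt_nonneg A hA m g


lemma exists_rep (g : ℕ → Fin n) : ∃ p : ℕ × ℕ, p.1 < p.2 ∧ p.2 ≤ n ∧ g p.1 = g p.2 := by
  have hcard : Fintype.card (Fin n) < Fintype.card (Fin (n+1)) := by simp
  obtain ⟨a, b, hab, h⟩ :=
    Fintype.exists_ne_map_eq_of_card_lt (fun a : Fin (n+1) => g a) hcard
  rcases lt_or_gt_of_ne (fun h' => hab (by exact_mod_cast Fin.ext h')) with hlt | hlt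
  · exact ⟨((a : ℕ), (b : ℕ)), hlt, Nat.le_of_lt_succ b.isLt, h⟩
  · exact ⟨((b : ℕ), (a : ℕ)), hlt, Nat.le_of_lt_succ a.isLt, h.symm⟩

noncomputable def D (g : ℕ → Fin n) : ℕ × ℕ := Classical.choose (exists_rep g)

lemma D_spec (g : ℕ → Fin n) :
    (D g).1 < (D g).2 ∧ (D g).2 ≤ n ∧ g (D g).1 = g (D g).2 :=
  Classical.choose_spec (exists_rep g)

/-- delete the cycle `[k, l]` from a walk -/
def del (k l : ℕ) (g : ℕ → Fin n) : ℕ → Fin n :=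
  fun t => if t < k then g t else g (t + (l - k))

/-- duplicate the cycle `[k, l]` in a walk -/
def dup (k l : ℕ) (g : ℕ → Fin n) : ℕ → Fin n :=
  fun t => if t ≤ l then g t else g (t - (l - k))

lemma dup_injective (k l : ℕ) : Function.Injective (dup (n := n) k l) := by
  intro g₁ g₂ h
  funext t
  rcases le_or_gt t l with ht | ht
  · have := congrFun h t
    simpa [dup, ht] using this
  · have h2 : ¬ (t + (l - k) ≤ l) := by omega
    have := congrFun h (t + (l - k))
    simp only [dup, h2, if_neg, not_false_iff] at this
    simpa using this

section surgery

variable {i j : Fin n} {k l : ℕ} {g : ℕ → Fin n}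

lemma del_mem (hkl : k < l) (hln : l ≤ n) (hg : g ∈ walks n i j) (hrep : g k = g l) :
    del k l g ∈ walks (n - (l - k)) i j := by
  rw [mem_walks] at hg ⊢
  obtain ⟨hs, h0, hm⟩ := hg
  have hcl : k + (l - k) = l := by omega
  have hend : del k l g (n - (l - k)) = g n := by
    have h1 : ¬ (n - (l - k) < k) := by omega
    have h2 : n - (l - k) + (l - k) = n := by omega
    simp [del, h1, h2]
  constructor
  · intro t ht
    rw [hend]
    have h1 : ¬ (t < k) := by omega
    have h2 : n ≤ t + (l - k) := by omega
    simp only [del, h1, if_neg, not_false_iff]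
    exact hs _ h2
  constructor
  · rcases Nat.eq_zero_or_pos k with hk | hk
    · have h1 : ¬ (0 < k) := by omega
      simp only [del, h1, if_neg, not_false_iff]
      rw [hk] at hrep ⊢
      simp only [Nat.zero_add]
      rw [Nat.sub_zero, ← hrep]
      exact h0
    · simp [del, hk, h0]
  · rw [hend, hm]

lemma dup_mem (hkl : k < l) (hln : l ≤ n) (hg : g ∈ walks n i j) (hrep : g k = g l) :
    dup k l g ∈ walks (n + (l - k)) i j := by
  rw [mem_walks] at hg ⊢
  obtain ⟨hs, h0, hm⟩ := hg
  have hend : dup k l g (n + (l - k)) = g n := by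
    have h1 : ¬ (n + (l - k) ≤ l) := by omega
    have h2 : n + (l - k) - (l - k) = n := by omega
    simp [dup, h1, h2]
  constructor
  · intro t ht
    rw [hend]
    have h1 : ¬ (t ≤ l) := by omega
    have h2 : n ≤ t - (l - k) := by omega
    simp only [dup, h1, if_neg, not_false_iff]
    exact hs _ h2
  constructor
  · have h1 : (0:ℕ) ≤ l := Nat.zero_le l
    simp [dup, h1, h0]
  · rw [hend, hm]

lemma wt_del (hkl : k < l) (hln : l ≤ n) (hrep : g k = g l) :
    wt A n g = wt A (n - (l - k)) (del k l g) * ∏ t ∈ Finset.Ico k l, A (g t) (g (t+1)) := by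
  have hkn : k ≤ n - (l - k) := by omega
  have hwd : wt A (n - (l - k)) (del k l g)
      = (∏ t ∈ Finset.Ico 0 k, A (g t) (g (t+1))) * ∏ t ∈ Finset.Ico l n, A (g t) (g (t+1)) := by
    rw [wt, Finset.range_eq_Ico, ← Finset.prod_Ico_consecutive _ (Nat.zero_le k) hkn]
    congr 1
    · refine Finset.prod_congr rfl ?_
      intro t ht
      rw [Finset.mem_Ico] at ht
      have h1 : t < k := ht.2
      rcases eq_or_lt_of_le (Nat.succ_le_of_lt h1) with h2 | h2
      · have h3 : ¬ (t + 1 < k) := by omega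
        have h4 : t + 1 + (l - k) = l := by omega
        simp only [del, h1, if_pos, h3, if_neg, not_false_iff, h4]
        rw [← hrep, show k = t+1 by omega]
      · simp [del, h1, h2]
    · have e1 : ∀ t ∈ Finset.Ico k (n - (l - k)),
          A (del k l g t) (del k l g (t+1)) = A (g ((l - k) + t)) (g (((l - k) + t)+1)) := by
        intro t ht
        rw [Finset.mem_Ico] at ht
        have h1 : ¬ (t < k) := by omega
        have h2 : ¬ (t + 1 < k) := by omega
        have h3 : t + (l - k) = (l - k) + t := by omega
        have h4 : t + 1 + (l - k) = (l - k) + t + 1 := by omega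
        simp only [del, h1, if_neg, not_false_iff, h2, h3, h4]
      rw [Finset.prod_congr rfl e1,
        Finset.prod_Ico_add (fun s => A (g s) (g (s+1))) k (n - (l - k)) (l - k),
        show k + (l - k) = l by omega, show n - (l - k) + (l - k) = n by omega]
  rw [hwd, wt, Finset.range_eq_Ico,
    ← Finset.prod_Ico_consecutive (fun t => A (g t) (g (t+1))) (Nat.zero_le k) (le_trans hkl.le hln),
    ← Finset.prod_Ico_consecutive (fun t => A (g t) (g (t+1))) hkl.le hln]
  ring

lemma wt_dup (hkl : k < l) (hln : l ≤ n) (hrep : g k = g l) :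
    wt A (n + (l - k)) (dup k l g) = wt A n g * ∏ t ∈ Finset.Ico k l, A (g t) (g (t+1)) := by
  have hln' : l ≤ n + (l - k) := by omega
  rw [wt, Finset.range_eq_Ico, ← Finset.prod_Ico_consecutive _ (Nat.zero_le l) hln']
  have e1 : ∀ t ∈ Finset.Ico 0 l,
      A (dup k l g t) (dup k l g (t+1)) = A (g t) (g (t+1)) := by
    intro t ht
    rw [Finset.mem_Ico] at ht
    have h1 : t ≤ l := ht.2.le
    have h2 : t + 1 ≤ l := ht.2
    simp [dup, h1, h2]
  have e2 : ∀ t ∈ Finset.Ico l (n + (l - k)),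
      A (dup k l g t) (dup k l g (t+1)) = A (g (t - (l - k))) (g ((t - (l - k))+1)) := by
    intro t ht
    rw [Finset.mem_Ico] at ht
    have h2 : ¬ (t + 1 ≤ l) := by omega
    have h4 : t + 1 - (l - k) = t - (l - k) + 1 := by omega
    rcases eq_or_lt_of_le ht.1 with h1 | h1
    · have h5 : t ≤ l := le_of_eq h1.symm
      have h6 : t - (l - k) = k := by omega
      simp only [dup, h5, if_pos, h2, if_neg, not_false_iff, h4, h6]
      rw [← h1, ← hrep]
    · have h5 : ¬ (t ≤ l) := by omega
      simp only [dup, h5, if_neg, not_false_iff, h2, h4]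
  rw [Finset.prod_congr rfl e1, Finset.prod_congr rfl e2]
  have hre : (∏ t ∈ Finset.Ico l (n + (l - k)), A (g (t - (l - k))) (g ((t - (l - k))+1)))
      = ∏ t ∈ Finset.Ico k n, A (g t) (g (t+1)) := by
    have := Finset.prod_Ico_add
      (fun t => A (g (t - (l - k))) (g ((t - (l - k))+1))) k n (l - k)
    have hl : k + (l - k) = l := by omega
    rw [hl] at this
    rw [← this]
    refine Finset.prod_congr rfl ?_
    intro t ht
    have : (l - k) + t - (l - k) = t := by omega
    rw [this]
  rw [hre, wt, Finset.range_eq_Ico,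
    ← Finset.prod_Ico_consecutive (fun t => A (g t) (g (t+1))) (Nat.zero_le k) (le_trans hkl.le hln),
    ← Finset.prod_Ico_consecutive (fun t => A (g t) (g (t+1))) hkl.le hln,
    ← Finset.prod_Ico_consecutive (fun t => A (g t) (g (t+1))) (Nat.zero_le k) hkl.le]
  ring

end surgery

lemma key (hA : ∀ i j, 0 ≤ A i j) (hn : 1 ≤ n) (i j : Fin n) :
    (A ^ n) i j ≤ (((n:ℝ)+1)^2 * ((n:ℝ)^n + 1)) *
      ∑ m ∈ (Finset.range (2*n+1)).erase n, (A ^ m) i j := by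
  classical
  set S : ℝ := ∑ m ∈ (Finset.range (2*n+1)).erase n, (A ^ m) i j with hSdef
  have hS0 : 0 ≤ S := Finset.sum_nonneg fun m _ => pow_entry_nonneg A hA m i j
  have hterm : ∀ m, m ≠ n → m ≤ 2*n → (A ^ m) i j ≤ S := by
    intro m hm hm2
    refine Finset.single_le_sum (f := fun m => (A ^ m) i j)
      (fun m _ => pow_entry_nonneg A hA m i j) ?_
    rw [Finset.mem_erase, Finset.mem_range]
    exact ⟨hm, by omega⟩
  have hmaps : ∀ g ∈ walks n i j, D g ∈ (Finset.range (n+1)) ×ˢ (Finset.range (n+1)) := by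
    intro g _
    obtain ⟨h1, h2, -⟩ := D_spec g
    simp only [Finset.mem_product, Finset.mem_range]
    omega
  rw [pow_apply_eq, ← Finset.sum_fiberwise_of_maps_to hmaps (wt A n)]
  have hclass : ∀ p ∈ (Finset.range (n+1)) ×ˢ (Finset.range (n+1)),
      (∑ g ∈ (walks n i j).filter (fun g => D g = p), wt A n g) ≤ ((n:ℝ)^n + 1) * S := by
    intro p _
    set cls := (walks n i j).filter (fun g => D g = p) with hcls
    rcases cls.eq_empty_or_nonempty with he | ⟨g₀, hg₀⟩
    · rw [he, Finset.sum_empty]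
      positivity
    · obtain ⟨k, l⟩ := p
      have hg₀' := hg₀
      rw [hcls, Finset.mem_filter] at hg₀'
      have hD₀ : D g₀ = (k, l) := hg₀'.2
      obtain ⟨hkl', hln', -⟩ := D_spec g₀
      rw [hD₀] at hkl' hln'
      have hkl : k < l := hkl'
      have hln : l ≤ n := hln'
      have hrepcls : ∀ g ∈ cls, g k = g l := by
        intro g hg
        rw [hcls, Finset.mem_filter] at hg
        obtain ⟨-, -, h3⟩ := D_spec g
        rw [hg.2] at h3
        exact h3
      have hmemcls : ∀ g ∈ cls, g ∈ walks n i j := by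
        intro g hg
        rw [hcls, Finset.mem_filter] at hg
        exact hg.1
      have hstep : ∀ g ∈ cls, wt A n g ≤
          wt A (n - (l - k)) (del k l g) + wt A (n + (l - k)) (dup k l g) := by
        intro g hg
        have hrep := hrepcls g hg
        have hd := wt_del A hkl hln hrep
        have hD := wt_dup A hkl hln hrep
        set W := ∏ t ∈ Finset.Ico k l, A (g t) (g (t+1)) with hW
        have hW0 : 0 ≤ W := Finset.prod_nonneg fun _ _ => hA _ _
        have hdel0 : 0 ≤ wt A (n - (l - k)) (del k l g) := wt_nonneg A hA _ _
        nlinarith [sq_nonneg (W - 1), mul_nonneg hdel0 hW0, mul_nonneg (mul_nonneg hdel0 hW0) hW0]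
      calc ∑ g ∈ cls, wt A n g
          ≤ ∑ g ∈ cls, (wt A (n - (l - k)) (del k l g) + wt A (n + (l - k)) (dup k l g)) :=
            Finset.sum_le_sum hstep
        _ = (∑ g ∈ cls, wt A (n - (l - k)) (del k l g))
            + ∑ g ∈ cls, wt A (n + (l - k)) (dup k l g) := Finset.sum_add_distrib
        _ ≤ (n:ℝ)^n * S + S := by
            gcongr ?_ + ?_
            · -- del part
              rw [Finset.sum_comp (wt A (n - (l - k))) (del k l)]
              have hcard : ∀ h ∈ cls.image (del k l),
                  ((cls.filter (fun g => del k l g = h)).card : ℝ) ≤ (n:ℝ)^n := by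
                intro h _
                have hinj : Set.InjOn (fun (g : ℕ → Fin n) => fun s : Fin (l - k - 1) => g (k + 1 + (s:ℕ)))
                    ↑(cls.filter (fun g => del k l g = h)) := by
                  intro g₁ hg₁ g₂ hg₂ hmapeq
                  simp only [Finset.coe_filter, Set.mem_setOf_eq] at hg₁ hg₂
                  obtain ⟨hg₁c, hg₁d⟩ := hg₁
                  obtain ⟨hg₂c, hg₂d⟩ := hg₂
                  have hdeq : del k l g₁ = del k l g₂ := by rw [hg₁d, hg₂d]
                  have hrep₁ := hrepcls g₁ hg₁c
                  have hrep₂ := hrepcls g₂ hg₂c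
                  funext t
                  rcases lt_or_ge t k with h1 | h1
                  · have := congrFun hdeq t
                    simpa [del, h1] using this
                  · rcases eq_or_lt_of_le h1 with h2 | h2
                    · have := congrFun hdeq k
                      have hk : ¬ (k < k) := lt_irrefl k
                      simp only [del, hk, if_neg, not_false_iff] at this
                      rw [show k + (l - k) = l by omega] at this
                      rw [← h2, hrep₁, hrep₂]
                      exact this
                    · rcases lt_or_ge t l with h3 | h3
                      · have hs : t - k - 1 < l - k - 1 := by omega
                        have := congrFun hmapeq ⟨t - k - 1, hs⟩
                        simp only at this
                        rw [show k + 1 + (t - k - 1) = t by omega] at this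
                        exact this
                      · have := congrFun hdeq (t - (l - k))
                        have h4 : ¬ (t - (l - k) < k) := by omega
                        simp only [del, h4, if_neg, not_false_iff] at this
                        rw [show t - (l - k) + (l - k) = t by omega] at this
                        exact this
                have := Finset.card_le_card_of_injOn
                  (t := (Finset.univ : Finset (Fin (l - k - 1) → Fin n)))
                  (fun (g : ℕ → Fin n) => fun s : Fin (l - k - 1) => g (k + 1 + (s:ℕ)))
                  (fun g _ => Finset.mem_univ _) hinj
                calc ((cls.filter (fun g => del k l g = h)).card : ℝ)
                    ≤ (Finset.univ : Finset (Fin (l - k - 1) → Fin n)).card := by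
                      exact_mod_cast this
                  _ = (n:ℝ) ^ (l - k - 1) := by
                      rw [Finset.card_univ, Fintype.card_fun]
                      push_cast
                      simp
                  _ ≤ (n:ℝ)^n := by
                      apply pow_le_pow_right₀
                      · exact_mod_cast hn
                      · omega
              calc ∑ h ∈ cls.image (del k l),
                    (cls.filter (fun g => del k l g = h)).card • wt A (n - (l - k)) h
                  ≤ ∑ h ∈ cls.image (del k l), (n:ℝ)^n * wt A (n - (l - k)) h := by
                    refine Finset.sum_le_sum ?_
                    intro h hh
                    rw [nsmul_eq_mul]
                    exact mul_le_mul_of_nonneg_right (hcard h hh) (wt_nonneg A hA _ _)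
                _ = (n:ℝ)^n * ∑ h ∈ cls.image (del k l), wt A (n - (l - k)) h := by
                    rw [Finset.mul_sum]
                _ ≤ (n:ℝ)^n * S := by
                    refine mul_le_mul_of_nonneg_left ?_ (by positivity)
                    calc ∑ h ∈ cls.image (del k l), wt A (n - (l - k)) h
                        ≤ ∑ h ∈ walks (n - (l - k)) i j, wt A (n - (l - k)) h := by
                          refine Finset.sum_le_sum_of_subset_of_nonneg ?_
                            (fun h _ _ => wt_nonneg A hA _ _)
                          intro h hh
                          rw [Finset.mem_image] at hh
                          obtain ⟨g, hg, rfl⟩ := hh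
                          exact del_mem hkl hln (hmemcls g hg) (hrepcls g hg)
                      _ = (A ^ (n - (l - k))) i j := (pow_apply_eq A _ i j).symm
                      _ ≤ S := hterm _ (by omega) (by omega)
            · -- dup part
              calc ∑ g ∈ cls, wt A (n + (l - k)) (dup k l g)
                  = ∑ h ∈ cls.image (dup k l), wt A (n + (l - k)) h := by
                    rw [Finset.sum_image]
                    intro g₁ _ g₂ _ hgg
                    exact dup_injective k l hgg
                _ ≤ ∑ h ∈ walks (n + (l - k)) i j, wt A (n + (l - k)) h := by
                    refine Finset.sum_le_sum_of_subset_of_nonneg ?_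
                      (fun h _ _ => wt_nonneg A hA _ _)
                    intro h hh
                    rw [Finset.mem_image] at hh
                    obtain ⟨g, hg, rfl⟩ := hh
                    exact dup_mem hkl hln (hmemcls g hg) (hrepcls g hg)
                _ = (A ^ (n + (l - k))) i j := (pow_apply_eq A _ i j).symm
                _ ≤ S := hterm _ (by omega) (by omega)
        _ = ((n:ℝ)^n + 1) * S := by ring
  calc ∑ p ∈ (Finset.range (n+1)) ×ˢ (Finset.range (n+1)),
        ∑ g ∈ (walks n i j).filter (fun g => D g = p), wt A n g
      ≤ ∑ _p ∈ (Finset.range (n+1)) ×ˢ (Finset.range (n+1)), ((n:ℝ)^n + 1) * S :=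
        Finset.sum_le_sum hclass
    _ = (((n:ℝ)+1)^2 * ((n:ℝ)^n + 1)) * S := by
        rw [Finset.sum_const, Finset.card_product, Finset.card_range, nsmul_eq_mul]
        push_cast
        ring

/-- nilpotent Jordan block -/
def Jb (N : ℕ) : Matrix (Fin N) (Fin N) ℝ :=
  Matrix.of fun i j => if (i:ℕ)+1 = (j:ℕ) then 1 else 0

lemma Jb_pow (N m : ℕ) (i : Fin N) : ∀ j : Fin N,
    ((Jb N)^m) i j = if (i:ℕ) + m = (j:ℕ) then 1 else 0 := by
  induction m with
  | zero =>
    intro j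
    simp [Matrix.one_apply, Fin.ext_iff]
  | succ m ih =>
    intro j
    rw [pow_succ, Matrix.mul_apply]
    have e1 : ∀ k, ((Jb N)^m) i k * (Jb N) k j
        = (if (i:ℕ) + m = (k:ℕ) then 1 else 0) * (if (k:ℕ)+1 = (j:ℕ) then (1:ℝ) else 0) := by
      intro k
      rw [ih k]
      rfl
    simp only [e1]
    rcases Nat.lt_or_ge ((i:ℕ)+m) N with h | h
    · rw [Finset.sum_eq_single (⟨(i:ℕ)+m, h⟩ : Fin N)]
      · have : ((i:ℕ) + m = ((⟨(i:ℕ)+m, h⟩ : Fin N) : ℕ)) := rfl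
        rw [if_pos this, one_mul]
        have h2 : (((⟨(i:ℕ)+m, h⟩ : Fin N) : ℕ) + 1 = (j:ℕ)) ↔ ((i:ℕ) + (m+1) = (j:ℕ)) := by
          simp only [Fin.val_mk]
          omega
        by_cases h3 : (i:ℕ) + (m+1) = (j:ℕ)
        · rw [if_pos (h2.mpr h3), if_pos h3]
        · rw [if_neg (fun hc => h3 (h2.mp hc)), if_neg h3]
      · intro b _ hb
        have : ¬ ((i:ℕ) + m = (b:ℕ)) := by
          intro hc
          exact hb (Fin.ext hc.symm)
        rw [if_neg this, zero_mul]
      · intro hfalse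
        exact absurd (Finset.mem_univ _) hfalse
    · rw [Finset.sum_eq_zero, if_neg (by omega : ¬ ((i:ℕ) + (m+1) = (j:ℕ)))]
      intro k _
      have : ¬ ((i:ℕ) + m = (k:ℕ)) := by
        have := k.isLt
        omega
      rw [if_neg this, zero_mul]

end CP



/-- The Clark–Paparella conjecture: `𝒫_{n+1} ⊊ 𝒫_n` for every `n ≥ 2`. -/
theorem polyPreservesNonneg_ssubset (n : ℕ) (hn : 2 ≤ n) :
    ∃ p : Polynomial ℝ, p ∈ polyPreservesNonneg n ∧ p ∉ polyPreservesNonneg (n + 1) := by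
  set K : ℝ := ((n:ℝ)+1)^2 * ((n:ℝ)^n + 1) with hK
  have hK0 : 0 < K := by positivity
  have hev : ∀ (N : ℕ) (A : Matrix (Fin N) (Fin N) ℝ) (i j : Fin N),
      (Polynomial.aeval A)
        ((∑ m ∈ Finset.range (2*n+1), (Polynomial.X : Polynomial ℝ) ^ m)
          - (1 + K⁻¹) • (Polynomial.X : Polynomial ℝ) ^ n) i j
      = (∑ m ∈ Finset.range (2*n+1), (A ^ m) i j) - (1 + K⁻¹) * (A ^ n) i j := by
    intro N A i j
    rw [map_sub, map_smul, map_sum]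
    simp only [Polynomial.aeval_X_pow]
    rw [Matrix.sub_apply, Matrix.smul_apply, Matrix.sum_apply, smul_eq_mul]
  refine ⟨(∑ m ∈ Finset.range (2*n+1), (Polynomial.X : Polynomial ℝ) ^ m)
    - (1 + K⁻¹) • (Polynomial.X : Polynomial ℝ) ^ n, ?_, ?_⟩
  · intro A hA i j
    rw [hev]
    have hsplit := Finset.add_sum_erase (Finset.range (2*n+1)) (fun m => (A^m) i j)
      (by rw [Finset.mem_range]; omega : n ∈ Finset.range (2*n+1))
    have hkey := CP.key A hA (by omega) i j
    have h2 : K⁻¹ * ((A^n) i j) ≤ K⁻¹ * (K * ∑ m ∈ (Finset.range (2*n+1)).erase n, (A ^ m) i j) :=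
      mul_le_mul_of_nonneg_left hkey (inv_nonneg.2 hK0.le)
    rw [← mul_assoc, inv_mul_cancel₀ hK0.ne', one_mul] at h2
    have h3 : (∑ m ∈ Finset.range (2*n+1), (A^m) i j)
        = (A^n) i j + ∑ m ∈ (Finset.range (2*n+1)).erase n, (A ^ m) i j := hsplit.symm
    rw [h3]
    nlinarith [h2]
  · intro hmem
    have hJnn : ∀ i j, 0 ≤ CP.Jb (n+1) i j := by
      intro i j
      rw [CP.Jb]
      dsimp only [Matrix.of_apply]
      split <;> norm_num
    have hval := hmem (CP.Jb (n+1)) hJnn 0 ⟨n, by omega⟩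
    rw [hev] at hval
    have hz : ((0 : Fin (n+1)) : ℕ) = 0 := rfl
    have hsum : (∑ m ∈ Finset.range (2*n+1), ((CP.Jb (n+1)) ^ m) 0 ⟨n, by omega⟩) = 1 := by
      have e1 : ∀ m ∈ Finset.range (2*n+1),
          ((CP.Jb (n+1)) ^ m) 0 ⟨n, by omega⟩ = if m = n then (1:ℝ) else 0 := by
        intro m _
        rw [CP.Jb_pow (n+1) m 0 ⟨n, by omega⟩]
        simp only [hz, Nat.zero_add, Fin.val_mk]
      rw [Finset.sum_congr rfl e1, Finset.sum_ite_eq' (Finset.range (2*n+1)) n (fun _ => (1:ℝ))]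
      rw [if_pos (by rw [Finset.mem_range]; omega)]
    have hmid : ((CP.Jb (n+1)) ^ n) 0 ⟨n, by omega⟩ = 1 := by
      rw [CP.Jb_pow (n+1) n 0 ⟨n, by omega⟩]
      simp [hz]
    rw [hsum, hmid, mul_one] at hval
    have hKinv : 0 < K⁻¹ := inv_pos.2 hK0
    linarith
end

section
/- The map φ on walks defined by duplicating, in place, the first minimal-length closed subwalk is injective: if two directed walks of length n from 1 to 2 in the complete directed graph on {1,…,n}, each whose shortest closed subwalk has length exactly k, map to the same walk of length n+k under duplicating the first occurring closed subwalk of length k, then the two walks are equal. -/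
/-- Injectivity of the duplication map `φ_k`: two walks of length `n` from vertex `1`
(`⟨0,_⟩`) to vertex `2` (`⟨1,_⟩`) on `n` vertices, each with minimal closed-subwalk
length exactly `k` and first closed subwalk of length `k` at positions `p1`, `p2`,
which give the same walk of length `n + k` after duplicating that first closed
subwalk in place, must coincide. -/
theorem duplication_map_injective (n k : ℕ) (hn : 2 ≤ n) (hk1 : 1 ≤ k)
    (hkn : k ≤ n - 1) (w1 w2 : ℕ → Fin n)
    (h10 : w1 0 = ⟨0, by omega⟩) (h1n : w1 n = ⟨1, by omega⟩)
    (h20 : w2 0 = ⟨0, by omega⟩) (h2n : w2 n = ⟨1, by omega⟩)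
    -- no closed subwalk of length `< k` in either walk:
    (hmin1 : ∀ l p, 1 ≤ l → l < k → p + l ≤ n → w1 p ≠ w1 (p + l))
    (hmin2 : ∀ l p, 1 ≤ l → l < k → p + l ≤ n → w2 p ≠ w2 (p + l))
    -- `p1`, `p2` are the first positions of a closed subwalk of length `k`:
    (p1 p2 : ℕ)
    (hp1 : p1 + k ≤ n ∧ w1 p1 = w1 (p1 + k) ∧
      ∀ q < p1, q + k ≤ n → w1 q ≠ w1 (q + k))
    (hp2 : p2 + k ≤ n ∧ w2 p2 = w2 (p2 + k) ∧
      ∀ q < p2, q + k ≤ n → w2 q ≠ w2 (q + k))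
    -- the duplicated walks agree:
    (heq : ∀ r ≤ n + k,
      (if r ≤ p1 + k then w1 r else w1 (r - k)) =
        (if r ≤ p2 + k then w2 r else w2 (r - k))) :
    ∀ r ≤ n, w1 r = w2 r := by
  obtain ⟨h1le, h1eq, h1min⟩ := hp1
  obtain ⟨h2le, h2eq, h2min⟩ := hp2
  have hpe : p1 = p2 := by
    by_contra h
    rcases Nat.lt_or_ge p1 p2 with h' | h'
    · have e1 := heq p1 (by omega)
      have e2 := heq (p1 + k) (by omega)
      rw [if_pos (by omega), if_pos (by omega)] at e1
      rw [if_pos (le_refl _), if_pos (by omega)] at e2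
      exact h2min p1 h' (by omega) (e1 ▸ e2 ▸ h1eq)
    · have h'' : p2 < p1 := by omega
      have e1 := heq p2 (by omega)
      have e2 := heq (p2 + k) (by omega)
      rw [if_pos (by omega), if_pos (by omega)] at e1
      rw [if_pos (by omega), if_pos (le_refl _)] at e2
      exact h1min p2 h'' (by omega) (e1.symm ▸ e2.symm ▸ h2eq)
  subst hpe
  intro r hr
  rcases le_or_gt r (p1 + k) with h | h
  · have e := heq r (by omega)
    rwa [if_pos h, if_pos h] at e
  · have e := heq (r + k) (by omega)
    rw [if_neg (by omega), if_neg (by omega)] at e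
    simpa using e
end

section
/- Let n ≥ 2 and 1 ≤ k ≤ n-1. Fix a directed walk W of length n-k from vertex 1 to vertex 2 in the complete directed graph on {1,…,n}. Then the number of walks of length n from 1 to 2 whose first minimal closed subwalk has length k and which map to W under deleting that closed subwalk is at most μ(n,k) = (n-k+1)∏_{j=1}^{k-1}(n-j). -/
/-!
A walk in the fiber is recovered from `W`, the position `p` at which a closed subwalk of
length `k` was cut out, and the `k - 1` inner vertices of that subwalk: its base vertex is
`W p`. Since the walk has no closed subwalk shorter than `k`, the inner vertices are pairwise
distinct and different from `W p`, so they form an embedding `Fin (k - 1) ↪ {v // v ≠ W p}`.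
There are at most `n - k + 1` positions and `(n - 1)⋯(n - k + 1)` such embeddings.
-/

namespace ClosedSubwalkDeletion

variable {V : Type*}

/-- The walk `w` with the segment `w (p+1), …, w (p+k)` removed. -/
def deleteSegment (w : ℕ → V) (p k r : ℕ) : V := if r ≤ p then w r else w (r + k)

def NoClosedSubwalkBelow (w : ℕ → V) (n k : ℕ) : Prop :=
  ∀ l p, 1 ≤ l → l < k → p + l ≤ n → w p ≠ w (p + l)

def fiber (n k : ℕ) (W : ℕ → V) : Set (ℕ → V) :=
  {w | (∀ r, n < r → w r = w n) ∧ NoClosedSubwalkBelow w n k ∧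
    ∃ p, p + k ≤ n ∧ w p = w (p + k) ∧ ∀ r ≤ n - k, deleteSegment w p k r = W r}

theorem NoClosedSubwalkBelow.apply_ne {w : ℕ → V} {n k : ℕ} (h : NoClosedSubwalkBelow w n k)
    {a b : ℕ} (hab : a < b) (hbk : b < a + k) (hbn : b ≤ n) : w a ≠ w b := by
  have := h (b - a) a (by omega) (by omega) (by omega)
  rwa [Nat.add_sub_cancel' hab.le] at this

theorem eq_of_deleteSegment_eq {w w' : ℕ → V} {n k p : ℕ}
    (hw : ∀ r, n < r → w r = w n) (hw' : ∀ r, n < r → w' r = w' n) (hpk : p + k ≤ n)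
    (hc : w p = w (p + k)) (hc' : w' p = w' (p + k))
    (hdel : ∀ r ≤ n - k, deleteSegment w p k r = deleteSegment w' p k r)
    (hinner : ∀ r, p < r → r < p + k → w r = w' r) : w = w' := by
  have hle : ∀ r ≤ n, w r = w' r := by
    intro r hr
    rcases le_or_gt r p with hrp | hpr
    · simpa [deleteSegment, hrp] using hdel r (by omega)
    rcases lt_trichotomy r (p + k) with hrk | rfl | hkr
    · exact hinner r hpr hrk
    · have hp := hdel p (by omega)
      simp only [deleteSegment, le_refl, if_true] at hp
      rw [← hc, ← hc', hp]
    · have := hdel (r - k) (by omega)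
      simpa [deleteSegment, show ¬r - k ≤ p by omega, Nat.sub_add_cancel (by omega : k ≤ r)]
        using this
  funext r
  rcases le_or_gt r n with hr | hr
  · exact hle r hr
  · rw [hw r hr, hw' r hr, hle n le_rfl]

def innerVertices {w : ℕ → V} {n k p : ℕ} (hw : NoClosedSubwalkBelow w n k) (hpk : p + k ≤ n) :
    Fin (k - 1) ↪ {v // v ≠ w p} where
  toFun i := ⟨w (p + 1 + i), (hw.apply_ne (by omega) (by omega) (by omega)).symm⟩
  inj' i j hij := by
    by_contra hne
    rcases Fin.lt_or_lt_of_ne hne with h | h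
    · exact hw.apply_ne (by simpa using h) (by omega) (by omega) (congrArg Subtype.val hij)
    · exact hw.apply_ne (by simpa using h) (by omega) (by omega) (congrArg Subtype.val hij).symm

variable {n k : ℕ} {W : ℕ → V}

noncomputable def cutPosition (w : fiber n k W) : ℕ := w.2.2.2.choose

theorem cutPosition_spec (w : fiber n k W) :
    cutPosition w + k ≤ n ∧ w.1 (cutPosition w) = w.1 (cutPosition w + k) ∧
      ∀ r ≤ n - k, deleteSegment w.1 (cutPosition w) k r = W r :=
  w.2.2.2.choose_spec

theorem apply_cutPosition (w : fiber n k W) : w.1 (cutPosition w) = W (cutPosition w) := by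
  simpa [deleteSegment] using (cutPosition_spec w).2.2 (cutPosition w)
    (by have := (cutPosition_spec w).1; omega)

noncomputable def encode (w : fiber n k W) :
    Σ p : Fin (n - k + 1), Fin (k - 1) ↪ {v // v ≠ W p} :=
  ⟨⟨cutPosition w, by have := (cutPosition_spec w).1; omega⟩,
    (innerVertices w.2.2.1 (cutPosition_spec w).1).trans
      (Equiv.subtypeEquivRight (by simp [apply_cutPosition w])).toEmbedding⟩

theorem coe_encode_snd_apply (w : fiber n k W) (i : Fin (k - 1)) :
    ((encode w).2 i : V) = w.1 (cutPosition w + 1 + i) :=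
  rfl

theorem encode_injective : Function.Injective (encode (n := n) (k := k) (W := W)) := by
  intro w w' h
  have hP : cutPosition w = cutPosition w' := congrArg (fun s => (s.1 : ℕ)) h
  have hinner := congrArg (fun s => fun i => (s.2 i : V)) h
  obtain ⟨hpk, hc, hdel⟩ := cutPosition_spec w
  obtain ⟨-, hc', hdel'⟩ := cutPosition_spec w'
  refine Subtype.ext (eq_of_deleteSegment_eq w.2.1 w'.2.1 hpk hc (hP ▸ hc') ?_ ?_)
  · intro r hr
    rw [hdel r hr, hP, hdel' r hr]
  · intro r hpr hrk
    have := congrFun hinner ⟨r - cutPosition w - 1, by omega⟩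
    simp only [coe_encode_snd_apply, ← hP] at this
    rwa [show cutPosition w + 1 + (r - cutPosition w - 1) = r by omega] at this

instance [Finite V] : Finite (fiber n k W) := Finite.of_injective encode encode_injective

theorem card_fiber_le [Fintype V] :
    Nat.card (fiber n k W) ≤ (n - k + 1) * (Fintype.card V - 1).descFactorial (k - 1) := by
  classical
  calc Nat.card (fiber n k W)
      ≤ Nat.card (Σ p : Fin (n - k + 1), Fin (k - 1) ↪ {v // v ≠ W p}) :=
        Nat.card_le_card_of_injective encode encode_injective
    _ = _ := by
      simp [Nat.card_eq_fintype_card, Fintype.card_embedding_eq, Fintype.card_subtype_compl]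

end ClosedSubwalkDeletion

theorem Nat.descFactorial_sub_one_eq_prod_Icc (n k : ℕ) :
    (n - 1).descFactorial (k - 1) = ∏ j ∈ Finset.Icc 1 (k - 1), (n - j) := by
  rw [Nat.descFactorial_eq_prod_range, ← Finset.Ico_add_one_right_eq_Icc,
    Finset.prod_Ico_eq_prod_range]
  exact Finset.prod_congr (by simp) fun i _ => by omega

/-- Vertices `1` and `2` are `⟨0, _⟩` and `⟨1, _⟩`; a walk of length `n` is a function
`ℕ → Fin n` that is constant from position `n` on. -/
theorem deletion_fiber_card_le (n k : ℕ) (hn : 2 ≤ n) (W : ℕ → Fin n) :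
    Nat.card {w : ℕ → Fin n //
      -- `w` is a walk of length `n` from vertex `1` to vertex `2`:
      w 0 = ⟨0, by omega⟩ ∧ w n = ⟨1, by omega⟩ ∧ (∀ r, n < r → w r = w n) ∧
      -- no closed subwalk of length `< k`:
      (∀ l p, 1 ≤ l → l < k → p + l ≤ n → w p ≠ w (p + l)) ∧
      -- some closed subwalk of length `k` exists, and deleting the first one
      -- (at its first position `p`) yields `W`:
      (∃ p, (p + k ≤ n ∧ w p = w (p + k) ∧
          ∀ q < p, q + k ≤ n → w q ≠ w (q + k)) ∧
        ∀ r ≤ n - k, (if r ≤ p then w r else w (r + k)) = W r)} ≤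
    muBound n k := by
  refine le_trans (Nat.card_le_card_of_injective (β := ClosedSubwalkDeletion.fiber n k W)
    (fun w => ⟨w.1, ?_⟩) fun _ _ h => Subtype.ext (Subtype.mk.inj h)) ?_
  · obtain ⟨-, -, hconst, hshort, p, ⟨hpk, hpc, -⟩, hdel⟩ := w.2
    exact ⟨hconst, hshort, p, hpk, hpc, hdel⟩
  · rw [muBound, ← Nat.descFactorial_sub_one_eq_prod_Icc]
    simpa using ClosedSubwalkDeletion.card_fiber_le (n := n) (k := k) (W := W)
end
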